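/- arXiv:2307.15935 — 7 statements merged into one kernel-verified Lean document; each statement's English description precedes it below -/
import Mathlib

section
/- For every integer n ≥ 1 and real z > 0, the function q ↦ F_{n,z}(q) is infinitely differentiable on the open interval (0,∞). -/
open MeasureTheory

/-- Givental's mirror oscillatory integral of `ℙⁿ` over the positive real thimble:
`F n z q = ∫_{(0,∞)ⁿ} exp(−(x₁+⋯+xₙ+q/(x₁⋯xₙ))/z) dx/(x₁⋯xₙ)`. -/
noncomputable def mirrorOscIntegral (n : ℕ) (z q : ℝ) : ℝ :=
  ∫ x in Set.univ.pi fun _ : Fin n => Set.Ioi (0 : ℝ),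
    Real.exp (-(∑ i, x i + q / ∏ i, x i) / z) / ∏ i, x i

namespace MirrorAux

/-- The positive orthant. -/
def Orth (n : ℕ) : Set (Fin n → ℝ) := Set.univ.pi fun _ : Fin n => Set.Ioi (0 : ℝ)

lemma measurableSet_Orth (n : ℕ) : MeasurableSet (Orth n) :=
  MeasurableSet.univ_pi fun _ => measurableSet_Ioi

lemma mem_Orth {n : ℕ} {x : Fin n → ℝ} (hx : x ∈ Orth n) (i : Fin n) : 0 < x i :=
  hx i (Set.mem_univ i)

lemma prod_pos_of_mem {n : ℕ} {x : Fin n → ℝ} (hx : x ∈ Orth n) : 0 < ∏ i, x i :=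
  Finset.prod_pos fun i _ => mem_Orth hx i

/-- Complexified integrand. -/
noncomputable def Gc (n : ℕ) (z : ℝ) (w : ℂ) (x : Fin n → ℝ) : ℂ :=
  Complex.exp (-(((∑ i, x i : ℝ) : ℂ) + w / ((∏ i, x i : ℝ) : ℂ)) / (z : ℂ)) /
    ((∏ i, x i : ℝ) : ℂ)

lemma measurable_Gc (n : ℕ) (z : ℝ) (w : ℂ) : Measurable (Gc n z w) := by
  have hP : Measurable fun x : Fin n → ℝ => ((∏ i, x i : ℝ) : ℂ) :=
    Complex.measurable_ofReal.comp
      (Finset.measurable_prod Finset.univ fun i _ => measurable_pi_apply i)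
  have hS : Measurable fun x : Fin n → ℝ => ((∑ i, x i : ℝ) : ℂ) :=
    Complex.measurable_ofReal.comp
      (Finset.measurable_sum Finset.univ fun i _ => measurable_pi_apply i)
  exact (Complex.measurable_exp.comp
    (((hS.add (measurable_const.div hP)).neg).div_const _)).div hP

lemma norm_Gc {n : ℕ} {z : ℝ} (w : ℂ) {x : Fin n → ℝ} (hp : 0 < ∏ i, x i) :
    ‖Gc n z w x‖ = Real.exp (-(∑ i, x i + w.re / ∏ i, x i) / z) / ∏ i, x i := by
  rw [Gc, norm_div, Complex.norm_exp]
  congr 1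
  · rw [Complex.div_ofReal_re, Complex.neg_re, Complex.add_re, Complex.ofReal_re,
      Complex.div_ofReal_re]
  · rw [Complex.norm_real, Real.norm_eq_abs, abs_of_pos hp]

/-- Elementary bound `exp(-(t/p)/z) / p^m ≤ m! (z/a)^m` for `0 < a ≤ t`, `p, z > 0`. -/
lemma exp_bound (m : ℕ) {a p t z : ℝ} (hz : 0 < z) (ha : 0 < a) (hp : 0 < p)
    (hat : a ≤ t) : Real.exp (-(t / p) / z) / p ^ m ≤ (m.factorial : ℝ) * (z / a) ^ m := by
  set u : ℝ := a / (p * z) with hu_def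
  have hu : 0 < u := by positivity
  have h1 : Real.exp (-(t / p) / z) ≤ Real.exp (-u) := by
    apply Real.exp_le_exp.2
    rw [hu_def, neg_div, div_div]
    exact neg_le_neg (by gcongr)
  have h2 : u ^ m ≤ (m.factorial : ℝ) * Real.exp u := by
    have h := Real.pow_div_factorial_le_exp u hu.le m
    rw [div_le_iff₀ (by positivity : (0:ℝ) < m.factorial)] at h
    linarith
  have h3 : u * (z * p / a) = 1 := by
    rw [hu_def]; field_simp
  have key : (1 : ℝ) ≤ (m.factorial : ℝ) * (z * p / a) ^ m * Real.exp u := by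
    calc (1 : ℝ) = (u * (z * p / a)) ^ m := by rw [h3, one_pow]
      _ = u ^ m * (z * p / a) ^ m := mul_pow _ _ _
      _ ≤ ((m.factorial : ℝ) * Real.exp u) * (z * p / a) ^ m :=
          mul_le_mul_of_nonneg_right h2 (by positivity)
      _ = (m.factorial : ℝ) * (z * p / a) ^ m * Real.exp u := by ring
  have h5 : Real.exp (-u) * Real.exp u = 1 := by
    rw [← Real.exp_add, neg_add_cancel, Real.exp_zero]
  have h6 : Real.exp (-u) ≤ (m.factorial : ℝ) * (z * p / a) ^ m := by
    have h7 := mul_le_mul_of_nonneg_left key (Real.exp_pos (-u)).le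
    rw [mul_one] at h7
    calc Real.exp (-u) ≤ Real.exp (-u) * ((m.factorial : ℝ) * (z * p / a) ^ m * Real.exp u) := h7
      _ = (m.factorial : ℝ) * (z * p / a) ^ m * (Real.exp (-u) * Real.exp u) := by ring
      _ = (m.factorial : ℝ) * (z * p / a) ^ m := by rw [h5, mul_one]
  rw [div_le_iff₀ (by positivity : (0:ℝ) < p ^ m)]
  calc Real.exp (-(t / p) / z) ≤ Real.exp (-u) := h1
    _ ≤ (m.factorial : ℝ) * (z * p / a) ^ m := h6
    _ = (m.factorial : ℝ) * (z / a) ^ m * p ^ m := by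
        rw [mul_assoc, ← mul_pow]; ring_nf

lemma aux1 {z a p s t : ℝ} (hz : 0 < z) (ha : 0 < a) (hp : 0 < p) (hat : a ≤ t) :
    Real.exp (-(s + t / p) / z) / p ≤ z / a * Real.exp (-s / z) := by
  have hsplit : Real.exp (-(s + t / p) / z) = Real.exp (-s / z) * Real.exp (-(t / p) / z) := by
    rw [← Real.exp_add]; congr 1; ring
  have hb := exp_bound 1 hz ha hp hat
  simp only [pow_one, Nat.factorial_one, Nat.cast_one, one_mul] at hb
  calc Real.exp (-(s + t / p) / z) / p
      = Real.exp (-s / z) * (Real.exp (-(t / p) / z) / p) := by rw [hsplit]; ring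
    _ ≤ Real.exp (-s / z) * (z / a) := by gcongr
    _ = z / a * Real.exp (-s / z) := by ring

lemma aux2 {z a p s t : ℝ} (hz : 0 < z) (ha : 0 < a) (hp : 0 < p) (hat : a ≤ t) :
    1 / (p * z) * (Real.exp (-(s + t / p) / z) / p) ≤ 2 * z / a ^ 2 * Real.exp (-s / z) := by
  have hsplit : Real.exp (-(s + t / p) / z) = Real.exp (-s / z) * Real.exp (-(t / p) / z) := by
    rw [← Real.exp_add]; congr 1; ring
  have hb := exp_bound 2 hz ha hp hat
  have hfact : ((Nat.factorial 2 : ℕ) : ℝ) = 2 := by norm_num [Nat.factorial]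
  rw [hfact] at hb
  have h2 : (1 : ℝ) / (p * z) * (Real.exp (-(s + t / p) / z) / p)
      = Real.exp (-s / z) * (Real.exp (-(t / p) / z) / p ^ 2) / z := by
    rw [hsplit]; field_simp
  rw [h2]
  calc Real.exp (-s / z) * (Real.exp (-(t / p) / z) / p ^ 2) / z
      ≤ Real.exp (-s / z) * (2 * (z / a) ^ 2) / z := by gcongr
    _ = 2 * z / a ^ 2 * Real.exp (-s / z) := by field_simp

lemma integrable_expS (n : ℕ) {z : ℝ} (hz : 0 < z) :
    Integrable (fun x : Fin n → ℝ => Real.exp (-(∑ i, x i) / z))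
      (volume.restrict (Orth n)) := by
  have h1 : IntegrableOn (fun t : ℝ => Real.exp (-(t / z))) (Set.Ioi 0) := by
    have h := exp_neg_integrableOn_Ioi 0 (inv_pos.2 hz)
    refine h.congr_fun (fun t _ => ?_) measurableSet_Ioi
    congr 1; ring
  have heq : (fun x : Fin n → ℝ => Real.exp (-(∑ i, x i) / z))
      = fun x => ∏ i, Real.exp (-(x i / z)) := by
    funext x
    rw [← Real.exp_sum]
    congr 1
    rw [neg_div, Finset.sum_div, ← Finset.sum_neg_distrib]
  rw [heq]
  have hind : (Orth n).indicator (fun x : Fin n → ℝ => ∏ i, Real.exp (-(x i / z)))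
      = fun x => ∏ i, (Set.Ioi 0).indicator (fun t => Real.exp (-(t / z))) (x i) := by
    funext x
    by_cases hx : x ∈ Orth n
    · rw [Set.indicator_of_mem hx]
      exact Finset.prod_congr rfl fun i _ => (Set.indicator_of_mem (Set.mem_Ioi.2 (mem_Orth hx i)) fun t => Real.exp (-(t / z))).symm
    · rw [Set.indicator_of_notMem hx]
      have hex : ∃ i, x i ∉ Set.Ioi (0 : ℝ) := by
        by_contra h; push_neg at h; exact hx fun i _ => h i
      obtain ⟨i, hi⟩ := hex
      exact (Finset.prod_eq_zero (Finset.mem_univ i) (Set.indicator_of_notMem hi _)).symm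
  have hint : Integrable
      (fun x : Fin n → ℝ => ∏ i, (Set.Ioi 0).indicator (fun t => Real.exp (-(t / z))) (x i)) :=
    Integrable.fintype_prod fun _ => (integrable_indicator_iff measurableSet_Ioi).2 h1
  rw [← hind] at hint
  exact (integrable_indicator_iff (measurableSet_Orth n)).1 hint

lemma integrable_Gc (n : ℕ) {z : ℝ} (hz : 0 < z) {w : ℂ} (hw : 0 < w.re) :
    Integrable (Gc n z w) (volume.restrict (Orth n)) := by
  refine Integrable.mono ((integrable_expS n hz).const_mul (z / w.re))
    (measurable_Gc n z w).aestronglyMeasurable ?_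
  refine (ae_restrict_iff' (measurableSet_Orth n)).2 (Filter.Eventually.of_forall fun x hx => ?_)
  have hp := prod_pos_of_mem hx
  rw [norm_Gc w hp, Real.norm_eq_abs, abs_of_nonneg (by positivity)]
  exact aux1 hz hw hp le_rfl

lemma hasDerivAt_Gc (n : ℕ) (z : ℝ) {x : Fin n → ℝ} (hp : 0 < ∏ i, x i) (w : ℂ) :
    HasDerivAt (fun w => Gc n z w x)
      (-(1 / (((∏ i, x i : ℝ) : ℂ) * (z : ℂ))) * Gc n z w x) w := by
  set p : ℂ := ((∏ i, x i : ℝ) : ℂ) with hp_def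
  have h1 : HasDerivAt (fun w : ℂ => -(((∑ i, x i : ℝ) : ℂ) + w / p) / (z : ℂ))
      (-(1 / p) / (z : ℂ)) w :=
    (((hasDerivAt_id w).div_const p).const_add _).neg.div_const _
  have h3 := (h1.cexp).div_const p
  refine h3.congr_deriv ?_
  unfold Gc
  ring

lemma mem_ball_re {w₀ w : ℂ} (hw : 0 < w₀.re) (hwb : w ∈ Metric.ball w₀ (w₀.re / 2)) :
    w₀.re / 2 ≤ w.re := by
  rw [Metric.mem_ball, Complex.dist_eq] at hwb
  have h := (Complex.abs_re_le_norm (w - w₀)).trans_lt hwb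
  rw [Complex.sub_re] at h
  have := abs_lt.1 h
  linarith [this.1]

lemma hasDerivAt_Fc (n : ℕ) {z : ℝ} (hz : 0 < z) {w₀ : ℂ} (hw : 0 < w₀.re) :
    HasDerivAt (fun w => ∫ x in Orth n, Gc n z w x)
      (∫ x in Orth n, -(1 / (((∏ i, x i : ℝ) : ℂ) * (z : ℂ))) * Gc n z w₀ x) w₀ := by
  set a := w₀.re / 2 with ha_def
  have ha : 0 < a := by positivity
  have hmeasP : Measurable fun x : Fin n → ℝ =>
      -(1 / (((∏ i, x i : ℝ) : ℂ) * (z : ℂ))) :=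
    ((measurable_const.div ((Complex.measurable_ofReal.comp
      (Finset.measurable_prod Finset.univ fun i _ => measurable_pi_apply i)).mul_const _))).neg
  refine (hasDerivAt_integral_of_dominated_loc_of_deriv_le (F := fun w x => Gc n z w x)
    (F' := fun w x => -(1 / (((∏ i, x i : ℝ) : ℂ) * (z : ℂ))) * Gc n z w x)
    (bound := fun x => 2 * z / a ^ 2 * Real.exp (-(∑ i, x i) / z)) (Metric.ball_mem_nhds w₀ ha)
    (Filter.Eventually.of_forall fun w => (measurable_Gc n z w).aestronglyMeasurable)
    (integrable_Gc n hz hw)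
    ((hmeasP.mul (measurable_Gc n z w₀)).aestronglyMeasurable)
    ?_ ((integrable_expS n hz).const_mul _) ?_).2
  · refine (ae_restrict_iff' (measurableSet_Orth n)).2
      (Filter.Eventually.of_forall fun x hx w hwb => ?_)
    have hp := prod_pos_of_mem hx
    have hre : a ≤ w.re := mem_ball_re hw hwb
    rw [norm_mul, norm_neg, norm_div, norm_one, norm_Gc w hp]
    rw [show (((∏ i, x i : ℝ) : ℂ) * (z : ℂ)) = (((∏ i, x i) * z : ℝ) : ℂ) by push_cast; ring]
    rw [Complex.norm_real, Real.norm_eq_abs, abs_of_pos (by positivity)]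
    exact aux2 hz ha hp hre
  · refine (ae_restrict_iff' (measurableSet_Orth n)).2
      (Filter.Eventually.of_forall fun x hx w _ => ?_)
    exact hasDerivAt_Gc n z (prod_pos_of_mem hx) w

end MirrorAux

/-- for `n ≥ 1` and `z > 0`, the function `q ↦ F_{n,z}(q)` is
infinitely differentiable on `(0,∞)`. -/
theorem mirrorOscIntegral_contDiffOn (n : ℕ) (hn : 1 ≤ n) (z : ℝ) (hz : 0 < z) :
    ContDiffOn ℝ (⊤ : ℕ∞) (fun q => mirrorOscIntegral n z q) (Set.Ioi (0 : ℝ)) := by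
  classical
  open MirrorAux in
  have hopen : IsOpen {w : ℂ | 0 < w.re} := isOpen_lt continuous_const Complex.continuous_re
  have hdiff : DifferentiableOn ℂ (fun w => ∫ x in Orth n, Gc n z w x) {w : ℂ | 0 < w.re} :=
    fun w hw => (hasDerivAt_Fc n hz hw).differentiableAt.differentiableWithinAt
  have hana : AnalyticOnNhd ℂ (fun w => ∫ x in Orth n, Gc n z w x) {w : ℂ | 0 < w.re} :=
    hdiff.analyticOnNhd hopen
  have h1 : AnalyticOnNhd ℝ (fun w => ∫ x in Orth n, Gc n z w x) {w : ℂ | 0 < w.re} :=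
    hana.restrictScalars
  have h2 : AnalyticOnNhd ℝ (fun q : ℝ => (q : ℂ)) (Set.Ioi 0) :=
    Complex.ofRealCLM.analyticOnNhd _
  have h3 : AnalyticOnNhd ℝ
      ((fun w => ∫ x in Orth n, Gc n z w x) ∘ fun q : ℝ => (q : ℂ)) (Set.Ioi 0) :=
    h1.comp h2 fun q hq => by simpa using (hq : (0:ℝ) < q)
  have h4 : AnalyticOnNhd ℝ
      (Complex.re ∘ (fun w => ∫ x in Orth n, Gc n z w x) ∘ fun q : ℝ => (q : ℂ))
      (Set.Ioi 0) :=
    (Complex.reCLM.analyticOnNhd Set.univ).comp h3 (Set.mapsTo_univ _ _)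
  have heq : ∀ q ∈ Set.Ioi (0 : ℝ), mirrorOscIntegral n z q
      = (Complex.re ∘ (fun w => ∫ x in Orth n, Gc n z w x) ∘ fun q : ℝ => (q : ℂ)) q := by
    intro q _
    have hGc : ∀ x : Fin n → ℝ, Gc n z (q : ℂ) x
        = ((Real.exp (-(∑ i, x i + q / ∏ i, x i) / z) / ∏ i, x i : ℝ) : ℂ) := by
      intro x
      rw [Gc]
      push_cast [Complex.ofReal_exp]
      ring_nf
    have hint : (∫ x in Orth n, Gc n z (q : ℂ) x)
        = ((∫ x in Orth n,
            Real.exp (-(∑ i, x i + q / ∏ i, x i) / z) / ∏ i, x i : ℝ) : ℂ) := by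
      rw [integral_congr_ae (Filter.Eventually.of_forall hGc)]
      exact integral_ofReal
    simp only [Function.comp]
    rw [hint, Complex.ofReal_re]
    rfl
  exact ((h4.analyticOn).contDiffOn (isOpen_Ioi.uniqueDiffOn)).congr heq
end

section
/- Let n ≥ 1 be an integer, z > 0 a real number, and p a complex number with Re p > 0. Then q ↦ q^{p−1} F_{n,z}(q) is integrable on (0,∞) and the Mellin transform of the mirror oscillatory integral of ℙⁿ is ∫_0^∞ q^{p−1} F_{n,z}(q) dq = z^{(n+1)p} · Γ(p)^{n+1}, where Γ is the complex Gamma function. -/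
open MeasureTheory

/-!
Writing `exp (-(∑ xᵢ + q / ∏ xᵢ) / z) = exp (-∑ xᵢ / z) · exp (-q / (z ∏ xᵢ))`, the `q`-integral
at fixed `x` is a scaled `Γ`-integral equal to `(z ∏ xᵢ) ^ p Γ(p)`. What remains is the integral of
`z ^ p Γ(p) ∏ xᵢ ^ (p - 1) e ^ (-xᵢ / z)` over the positive orthant, which factors as
`z ^ p Γ(p) (z ^ p Γ(p)) ^ n`. Fubini applies because the modulus of the integrand at `p` is the
integrand at `Re p`, for which the same computation gives a finite value.
-/

open Set

lemma cexp_mul_log_eq_cpow {t : ℝ} (ht : 0 < t) (w : ℂ) :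
    Complex.exp (w * Real.log t) = (t : ℂ) ^ w := by
  rw [Complex.cpow_def_of_ne_zero (Complex.ofReal_ne_zero.mpr ht.ne'),
    ← Complex.ofReal_log ht.le, mul_comm]

lemma ofReal_norm_cexp_sub_one_mul_log (p : ℂ) (t : ℝ) :
    (‖Complex.exp ((p - 1) * Real.log t)‖ : ℂ) = Complex.exp ((p.re - 1) * Real.log t) := by
  rw [Complex.norm_exp, Complex.ofReal_exp]
  simp

noncomputable def gammaKernel (p : ℂ) (c t : ℝ) : ℂ :=
  Complex.exp ((p - 1) * Real.log t) * Real.exp (-t / c)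

lemma gammaKernel_eq_cpow {p : ℂ} (c : ℝ) {t : ℝ} (ht : 0 < t) :
    gammaKernel p c t = (t : ℂ) ^ (p - 1) * Complex.exp (-((c⁻¹ : ℝ) * t)) := by
  rw [gammaKernel, cexp_mul_log_eq_cpow ht]
  push_cast
  ring_nf

lemma integral_gammaKernel {p : ℂ} (hp : 0 < p.re) {c : ℝ} (hc : 0 < c) :
    ∫ t in Ioi 0, gammaKernel p c t = Complex.exp (p * Real.log c) * Complex.Gamma p := by
  rw [setIntegral_congr_fun measurableSet_Ioi fun t ht => gammaKernel_eq_cpow c ht,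
    Complex.integral_cpow_mul_exp_neg_mul_Ioi hp (inv_pos.mpr hc), cexp_mul_log_eq_cpow hc]
  push_cast
  rw [one_div, inv_inv]

lemma integrableOn_gammaKernel {p : ℂ} (hp : 0 < p.re) {c : ℝ} (hc : 0 < c) :
    IntegrableOn (gammaKernel p c) (Ioi 0) := by
  refine Integrable.mono' (integrableOn_rpow_mul_exp_neg_mul_rpow (s := p.re - 1)
    (by linarith) one_pos (inv_pos.mpr hc)) (by unfold gammaKernel; fun_prop) ?_
  refine ae_restrict_of_forall_mem measurableSet_Ioi fun t ht => le_of_eq ?_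
  rw [gammaKernel, norm_mul, Complex.norm_exp, Complex.norm_real, Real.norm_of_nonneg
    (Real.exp_pos _).le, Real.rpow_def_of_pos ht, Real.rpow_one]
  congr 2
  · simp [mul_comm]
  · ring

lemma prod_gammaKernel {ι : Type*} [Fintype ι] (p : ℂ) (c : ℝ) {x : ι → ℝ}
    (hx : ∀ i, 0 < x i) :
    ∏ i, gammaKernel p c (x i) =
      Complex.exp ((p - 1) * Real.log (∏ i, x i)) * Real.exp (-(∑ i, x i) / c) := by
  rw [Real.log_prod fun i _ => (hx i).ne', neg_div, Finset.sum_div, ← Finset.sum_neg_distrib,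
    Real.exp_sum]
  push_cast
  rw [Finset.mul_sum, Complex.exp_sum, ← Finset.prod_mul_distrib]
  simp [gammaKernel, neg_div]

section PiProd

variable {ι E 𝕜 : Type*} [Fintype ι] [MeasureSpace E] [SigmaFinite (volume : Measure E)]
  [RCLike 𝕜] {f : E → 𝕜} {s : Set E}

lemma MeasureTheory.IntegrableOn.univ_pi_prod (hf : IntegrableOn f s) :
    IntegrableOn (fun x : ι → E => ∏ i, f (x i)) (univ.pi fun _ => s) := by
  rw [IntegrableOn, volume_pi, Measure.restrict_pi_pi]
  exact Integrable.fintype_prod fun _ => hf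

lemma setIntegral_univ_pi_prod :
    ∫ x in univ.pi (fun _ : ι => s), ∏ i, f (x i) = (∫ t in s, f t) ^ Fintype.card ι := by
  rw [volume_pi, Measure.restrict_pi_pi, integral_fintype_prod_eq_pow]

end PiProd

section Mirror

variable {ι : Type*} [Fintype ι]

noncomputable def mirrorIntegrand (z : ℝ) (x : ι → ℝ) (q : ℝ) : ℝ :=
  Real.exp (-(∑ i, x i + q / ∏ i, x i) / z) / ∏ i, x i

noncomputable def mirrorMellinIntegrand (p : ℂ) (z : ℝ) (x : ι → ℝ) (q : ℝ) : ℂ :=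
  Complex.exp ((p - 1) * Real.log q) * mirrorIntegrand z x q

lemma mirrorMellinIntegrand_eq (p : ℂ) (z : ℝ) (x : ι → ℝ) (q : ℝ) :
    mirrorMellinIntegrand p z x q =
      (Real.exp (-(∑ i, x i) / z) / ∏ i, x i : ℝ) * gammaKernel p (z * ∏ i, x i) q := by
  have hexp : -(∑ i, x i + q / ∏ i, x i) / z = -(∑ i, x i) / z + -q / (z * ∏ i, x i) := by ring
  rw [mirrorMellinIntegrand, mirrorIntegrand, gammaKernel, hexp, Real.exp_add]
  push_cast
  ring

variable {p : ℂ} {z : ℝ} {x : ι → ℝ}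

lemma integrableOn_mirrorMellinIntegrand (hp : 0 < p.re) (hz : 0 < z) (hx : ∀ i, 0 < x i) :
    IntegrableOn (mirrorMellinIntegrand p z x) (Ioi 0) := by
  have hP : 0 < ∏ i, x i := Finset.prod_pos fun i _ => hx i
  rw [funext (mirrorMellinIntegrand_eq p z x)]
  exact (integrableOn_gammaKernel hp (mul_pos hz hP)).const_mul _

lemma setIntegral_mirrorMellinIntegrand (hp : 0 < p.re) (hz : 0 < z) (hx : ∀ i, 0 < x i) :
    ∫ q in Ioi 0, mirrorMellinIntegrand p z x q =
      Complex.exp (p * Real.log z) * Complex.Gamma p * ∏ i, gammaKernel p z (x i) := by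
  have hP : 0 < ∏ i, x i := Finset.prod_pos fun i _ => hx i
  rw [funext (mirrorMellinIntegrand_eq p z x), integral_const_mul,
    integral_gammaKernel hp (mul_pos hz hP), prod_gammaKernel p z hx, Real.log_mul hz.ne' hP.ne']
  have hP_exp : ((∏ i, x i : ℝ) : ℂ) = Complex.exp (Real.log (∏ i, x i)) := by
    rw [← Complex.ofReal_exp, Real.exp_log hP]
  rw [Complex.ofReal_div, hP_exp, Complex.ofReal_add, mul_add, Complex.exp_add, sub_mul,
    Complex.exp_sub, one_mul]
  ring

lemma ofReal_norm_mirrorMellinIntegrand (hx : ∀ i, 0 < x i) (q : ℝ) :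
    (‖mirrorMellinIntegrand p z x q‖ : ℂ) = mirrorMellinIntegrand p.re z x q := by
  have hP : 0 < ∏ i, x i := Finset.prod_pos fun i _ => hx i
  rw [mirrorMellinIntegrand, mirrorMellinIntegrand, norm_mul, Complex.ofReal_mul,
    ofReal_norm_cexp_sub_one_mul_log, Complex.norm_real, mirrorIntegrand,
    Real.norm_of_nonneg (div_nonneg (Real.exp_pos _).le hP.le)]

lemma integrable_mirrorMellinIntegrand (hp : 0 < p.re) (hz : 0 < z) :
    Integrable (Function.uncurry (mirrorMellinIntegrand p z))
      ((volume.restrict (univ.pi fun _ : ι => Ioi (0 : ℝ))).prod (volume.restrict (Ioi 0))) := by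
  set S := univ.pi fun _ : ι => Ioi (0 : ℝ)
  have hS : MeasurableSet S := .univ_pi fun _ => measurableSet_Ioi
  have hS_pos : ∀ x ∈ S, ∀ i, 0 < x i := fun x hx i => hx i (mem_univ i)
  have hσ : 0 < (p.re : ℂ).re := by simpa using hp
  rw [integrable_prod_iff (by unfold mirrorMellinIntegrand mirrorIntegrand; fun_prop)]
  refine ⟨(ae_restrict_mem hS).mono fun x hx =>
    integrableOn_mirrorMellinIntegrand hp hz (hS_pos x hx), ?_⟩
  have h_norm : ∀ x ∈ S, ((∫ q in Ioi 0, ‖mirrorMellinIntegrand p z x q‖ : ℝ) : ℂ) =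
      Complex.exp (p.re * Real.log z) * Complex.Gamma p.re * ∏ i, gammaKernel p.re z (x i) := by
    intro x hx
    rw [← integral_complex_ofReal]
    simp_rw [ofReal_norm_mirrorMellinIntegrand (hS_pos x hx)]
    exact setIntegral_mirrorMellinIntegrand hσ hz (hS_pos x hx)
  refine (((integrableOn_gammaKernel hσ hz).univ_pi_prod (ι := ι)).const_mul
    (Complex.exp (p.re * Real.log z) * Complex.Gamma p.re)).norm.congr ?_
  filter_upwards [ae_restrict_mem hS] with x hx
  rw [← h_norm x hx, Complex.norm_real,
    Real.norm_of_nonneg (integral_nonneg fun _ => norm_nonneg _)]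
  rfl

end Mirror

theorem mellin_mirrorOscIntegral_general (n : ℕ) (z : ℝ) (hz : 0 < z)
    (p : ℂ) (hp : 0 < p.re) :
    IntegrableOn
      (fun q : ℝ => Complex.exp ((p - 1) * Real.log q) * (mirrorOscIntegral n z q : ℂ))
      (Set.Ioi (0 : ℝ)) volume ∧
    (∫ q in Set.Ioi (0 : ℝ),
        Complex.exp ((p - 1) * Real.log q) * (mirrorOscIntegral n z q : ℂ)) =
      Complex.exp (((n : ℂ) + 1) * p * Real.log z) * Complex.Gamma p ^ (n + 1) := by
  set S := univ.pi fun _ : Fin n => Ioi (0 : ℝ)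
  have hF : (fun q : ℝ => Complex.exp ((p - 1) * Real.log q) * (mirrorOscIntegral n z q : ℂ)) =
      fun q => ∫ x in S, mirrorMellinIntegrand p z x q := by
    funext q
    rw [mirrorOscIntegral, ← integral_complex_ofReal, ← integral_const_mul]
    rfl
  have H := integrable_mirrorMellinIntegrand (ι := Fin n) hp hz
  refine ⟨hF ▸ H.integral_prod_right, ?_⟩
  rw [hF, ← integral_integral_swap H, setIntegral_congr_fun (.univ_pi fun _ => measurableSet_Ioi)
      fun x hx => setIntegral_mirrorMellinIntegrand hp hz fun i => hx i (mem_univ i),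
    integral_const_mul, setIntegral_univ_pi_prod, integral_gammaKernel hp hz, Fintype.card_fin,
    mul_pow, ← Complex.exp_nat_mul,
    show ((n : ℂ) + 1) * p * Real.log z = p * Real.log z + n * (p * Real.log z) by ring,
    Complex.exp_add]
  ring

/-- for `n ≥ 1`, `z > 0` and `Re p > 0`, the function
`q ↦ q^{p−1} F_{n,z}(q)` (with `q^{p−1} = exp((p−1) log q)`, real logarithm)
is integrable on `(0,∞)` and its Mellin transform is
`∫₀^∞ q^{p−1} F_{n,z}(q) dq = z^{(n+1)p} Γ(p)^{n+1}`. -/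
theorem mellin_mirrorOscIntegral (n : ℕ) (hn : 1 ≤ n) (z : ℝ) (hz : 0 < z)
    (p : ℂ) (hp : 0 < p.re) :
    IntegrableOn
      (fun q : ℝ => Complex.exp ((p - 1) * Real.log q) * (mirrorOscIntegral n z q : ℂ))
      (Set.Ioi (0 : ℝ)) volume ∧
    (∫ q in Set.Ioi (0 : ℝ),
        Complex.exp ((p - 1) * Real.log q) * (mirrorOscIntegral n z q : ℂ)) =
      Complex.exp (((n : ℂ) + 1) * p * Real.log z) * Complex.Gamma p ^ (n + 1) :=
  mellin_mirrorOscIntegral_general n z hz p hp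
end

section
/- Let n ≥ 1 be an integer and z > 0, q > 0, c > 0 real numbers. Then the Mellin–Barnes integral representation holds: F_{n,z}(q) = (1/(2π)) ∫_{−∞}^{∞} q^{−(c+it)} · z^{(n+1)(c+it)} · Γ(c+it)^{n+1} dt, where the integrand is integrable on ℝ, Γ is the complex Gamma function, and powers of the positive reals q and z are taken with the real logarithm. -/
/-!
Givental's integral is an iterated multiplicative convolution of `n + 1` copies of
`t ↦ exp (-t / z)`: integrating first in `q` at fixed `x` (Fubini), each coordinate contributes
a Mellin transform `z ^ s Γ(s)`, so the Mellin transform of `F_{n,z}` is `(z ^ s Γ(s)) ^ (n + 1)`.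
On the line `Re s = c`, `‖Γ(s)‖ ≤ Γ(c)` and `‖s Γ(s)‖ ≤ Γ(c + 1)`, so for `n ≥ 1` this is
`O(1 / (c² + t²))` and hence integrable; `F_{n,z}` is continuous by dominated convergence, and
Mellin inversion gives the representation.
-/

open MeasureTheory

/-- The Mellin–Barnes integrand `q^{−(c+it)} z^{(n+1)(c+it)} Γ(c+it)^{n+1}`,
with powers of the positive reals `q`, `z` taken via the real logarithm. -/
noncomputable def mellinBarnesIntegrand (n : ℕ) (z q c : ℝ) (t : ℝ) : ℂ :=
  Complex.exp (-((c : ℂ) + t * Complex.I) * Real.log q) *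
    Complex.exp (((n : ℂ) + 1) * ((c : ℂ) + t * Complex.I) * Real.log z) *
    Complex.Gamma ((c : ℂ) + t * Complex.I) ^ (n + 1)

open Set Complex

theorem Complex.norm_Gamma_le_Gamma_re {s : ℂ} (hs : 0 < s.re) : ‖Gamma s‖ ≤ Real.Gamma s.re := by
  rw [Gamma_eq_integral hs, Real.Gamma_eq_integral hs, GammaIntegral]
  refine (norm_integral_le_integral_norm _).trans_eq
    (setIntegral_congr_fun measurableSet_Ioi fun x (hx : 0 < x) => ?_)
  rw [norm_mul, norm_cpow_eq_rpow_re_of_pos hx, norm_real,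
    Real.norm_of_nonneg (Real.exp_pos _).le, sub_re, one_re]

theorem Complex.norm_mul_norm_Gamma_le {s : ℂ} (hs : 0 < s.re) :
    ‖s‖ * ‖Gamma s‖ ≤ Real.Gamma (s.re + 1) := by
  have hs0 : s ≠ 0 := fun h => hs.ne' (by simp [h])
  have hre : (s + 1).re = s.re + 1 := by simp
  rw [← norm_mul, ← Gamma_add_one s hs0, ← hre]
  exact norm_Gamma_le_Gamma_re (by linarith)

theorem integrable_inv_sq_add_sq {c : ℝ} (hc : c ≠ 0) :
    Integrable fun t : ℝ => (c ^ 2 + t ^ 2)⁻¹ := by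
  refine ((integrable_inv_one_add_sq.comp_div hc).const_mul (c ^ 2)⁻¹).congr
    (Filter.Eventually.of_forall fun t => ?_)
  field_simp

theorem integrable_Gamma_vertical_pow {c : ℝ} (hc : 0 < c) {m : ℕ} (hm : 2 ≤ m) :
    Integrable fun t : ℝ => Gamma (c + t * I) ^ m := by
  obtain ⟨k, rfl⟩ : ∃ k, m = k + 2 := ⟨m - 2, by omega⟩
  have hre : ∀ t : ℝ, ((c : ℂ) + t * I).re = c := by simp
  have hcont : Continuous fun t : ℝ => Gamma (c + t * I) := by
    refine continuous_iff_continuousAt.mpr fun t => ContinuousAt.comp (g := Gamma) ?_ (by fun_prop)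
    refine (differentiableAt_Gamma _ fun j h => ?_).continuousAt
    have := hre t
    rw [h] at this
    simp at this
    linarith [(j.cast_nonneg : (0 : ℝ) ≤ j)]
  refine ((integrable_inv_sq_add_sq hc.ne').const_mul
    (Real.Gamma c ^ k * Real.Gamma (c + 1) ^ 2)).mono' (hcont.pow _).aestronglyMeasurable
    (Filter.Eventually.of_forall fun t => ?_)
  have hs : 0 < ((c : ℂ) + t * I).re := by rw [hre]; exact hc
  have h1 := norm_Gamma_le_Gamma_re hs
  have h2 := norm_mul_norm_Gamma_le hs
  rw [hre] at h1 h2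
  have hsq : ‖(c + t * I : ℂ)‖ ^ 2 = c ^ 2 + t ^ 2 := by rw [Complex.sq_norm, normSq_add_mul_I]
  have hpos : 0 < c ^ 2 + t ^ 2 := by positivity
  calc ‖Gamma (c + t * I) ^ (k + 2)‖
      = ‖Gamma (c + t * I)‖ ^ k * (‖(c + t * I : ℂ)‖ * ‖Gamma (c + t * I)‖) ^ 2
          / ‖(c + t * I : ℂ)‖ ^ 2 := by
        rw [norm_pow, mul_pow, mul_div_assoc, mul_div_cancel_left₀ _ (by rw [hsq]; exact hpos.ne'),
          pow_add]
    _ ≤ Real.Gamma c ^ k * Real.Gamma (c + 1) ^ 2 / (c ^ 2 + t ^ 2) := by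
        rw [hsq]; gcongr
    _ = _ := div_eq_mul_inv _ _

theorem Integrable.ofReal_cpow_mul {g : ℝ → ℂ} (hg : Integrable g) {x : ℝ} (hx : 0 < x)
    {w : ℝ → ℂ} (hw : Continuous w) {r : ℝ} (hwr : ∀ t, (w t).re = r) :
    Integrable fun t => (x : ℂ) ^ (w t) * g t :=
  hg.bdd_mul (c := x ^ r)
    (hw.const_cpow (Or.inl (ofReal_ne_zero.mpr hx.ne'))).aestronglyMeasurable
    (Filter.Eventually.of_forall fun t => by rw [norm_cpow_eq_rpow_re_of_pos hx, hwr])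

theorem verticalIntegrable_cpow_mul_Gamma_pow {z : ℝ} (hz : 0 < z) {c : ℝ} (hc : 0 < c) {m : ℕ}
    (hm : 2 ≤ m) : VerticalIntegrable (fun s => ((z : ℂ) ^ s * Gamma s) ^ m) c := by
  simp_rw [VerticalIntegrable, mul_pow, ← cpow_nat_mul]
  exact Integrable.ofReal_cpow_mul (integrable_Gamma_vertical_pow hc hm) hz (r := m * c)
    (by fun_prop) fun t => by simp

theorem hasMellin_exp_neg_div {r : ℝ} (hr : 0 < r) {s : ℂ} (hs : 0 < s.re) :
    HasMellin (fun t : ℝ => ((Real.exp (-(t / r)) : ℝ) : ℂ)) s ((r : ℂ) ^ s * Gamma s) := by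
  have hGamma : HasMellin (fun t : ℝ => ((Real.exp (-t) : ℝ) : ℂ)) s (Gamma s) :=
    ⟨by simpa only [MellinConvergent, smul_eq_mul, mul_comm] using GammaIntegral_convergent hs,
      by rw [Gamma_eq_integral hs, GammaIntegral_eq_mellin]⟩
  have hrinv : 0 < r⁻¹ := inv_pos.mpr hr
  simp_rw [div_eq_inv_mul]
  refine ⟨(MellinConvergent.comp_mul_left hrinv).mpr hGamma.1, ?_⟩
  rw [mellin_comp_mul_left (fun t : ℝ => ((Real.exp (-t) : ℝ) : ℂ)) s hrinv, hGamma.2,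
    smul_eq_mul, ofReal_inv, inv_cpow _ _ (by rw [arg_ofReal_of_nonneg hr.le]; positivity),
    cpow_neg, inv_inv]

theorem hasMellin_integral {X E : Type*} [MeasurableSpace X] {μ : Measure X} [SFinite μ]
    [NormedAddCommGroup E] [NormedSpace ℂ E] {K : X → ℝ → E} {s : ℂ}
    (hK : Integrable (fun p : X × ℝ => (p.2 : ℂ) ^ (s - 1) • K p.1 p.2)
      (μ.prod (volume.restrict (Ioi 0)))) :
    HasMellin (fun t => ∫ x, K x t ∂μ) s (∫ x, mellin (K x) s ∂μ) := by
  have hsmul : ∀ t : ℝ, (t : ℂ) ^ (s - 1) • ∫ x, K x t ∂μ = ∫ x, (t : ℂ) ^ (s - 1) • K x t ∂μ :=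
    fun t => (integral_smul _ _).symm
  refine ⟨?_, ?_⟩
  · simpa only [MellinConvergent, IntegrableOn, hsmul] using hK.integral_prod_right
  · simp only [mellin, hsmul]
    exact (integral_integral_swap hK).symm

theorem ofReal_norm_cpow_smul_ofReal {t : ℝ} (ht : 0 < t) {r : ℝ} (hr : 0 ≤ r) (s : ℂ) :
    ((‖(t : ℂ) ^ (s - 1) • (r : ℂ)‖ : ℝ) : ℂ) = (t : ℂ) ^ ((s.re : ℂ) - 1) • (r : ℂ) := by
  rw [norm_smul, norm_cpow_eq_rpow_re_of_pos ht, norm_real, Real.norm_of_nonneg hr, smul_eq_mul,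
    ← ofReal_one, ← ofReal_sub, ← ofReal_cpow ht.le]
  simp

/-- For a nonnegative kernel `‖t ^ (s - 1) • K x t‖ = t ^ (Re s - 1) K x t`, so the integrability
in `x` required by Fubini is that of the Mellin transform at `Re s`. -/
theorem integrable_cpow_smul_prod_of_nonneg {X : Type*} [MeasurableSpace X] {μ : Measure X}
    [SFinite μ] {K : X → ℝ → ℝ} {s : ℂ}
    (hmeas : AEStronglyMeasurable (fun p : X × ℝ => (p.2 : ℂ) ^ (s - 1) • (K p.1 p.2 : ℂ))
      (μ.prod (volume.restrict (Ioi 0))))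
    (hK : ∀ᵐ x ∂μ, ∀ t, 0 ≤ K x t)
    (hconv : ∀ᵐ x ∂μ, MellinConvergent (fun t => (K x t : ℂ)) s)
    (hint : Integrable (fun x => mellin (fun t => (K x t : ℂ)) s.re) μ) :
    Integrable (fun p : X × ℝ => (p.2 : ℂ) ^ (s - 1) • (K p.1 p.2 : ℂ))
      (μ.prod (volume.restrict (Ioi 0))) := by
  refine (integrable_prod_iff hmeas).mpr ⟨hconv, hint.re.congr ?_⟩
  filter_upwards [hK] with x hx
  show (mellin (fun t => (K x t : ℂ)) s.re).re = _
  rw [← ofReal_re (∫ t in Ioi 0, _), ← integral_complex_ofReal, mellin]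
  congr 1
  exact setIntegral_congr_fun measurableSet_Ioi fun t ht =>
    (ofReal_norm_cpow_smul_ofReal ht (hx t) s).symm

theorem Complex.ofReal_prod_cpow {ι : Type*} (t : Finset ι) {x : ι → ℝ} (hx : ∀ i ∈ t, 0 ≤ x i)
    (s : ℂ) :
    ((∏ i ∈ t, x i : ℝ) : ℂ) ^ s = ∏ i ∈ t, (x i : ℂ) ^ s := by
  induction t using Finset.cons_induction with
  | empty => simp
  | cons a t ha ih =>
    rw [Finset.forall_mem_cons] at hx
    rw [Finset.prod_cons, Finset.prod_cons, ofReal_mul,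
      mul_cpow_ofReal_nonneg hx.1 (Finset.prod_nonneg hx.2), ih hx.2]

theorem Real.exp_neg_sum_div {ι : Type*} [Fintype ι] (z : ℝ) (x : ι → ℝ) :
    Real.exp (-(∑ i, x i) / z) = ∏ i, Real.exp (-(x i / z)) := by
  rw [← Real.exp_sum, neg_div, Finset.sum_div, Finset.sum_neg_distrib]

theorem volume_restrict_pi_Ioi {ι : Type*} [Fintype ι] :
    volume.restrict (univ.pi fun _ : ι => Ioi (0 : ℝ))
      = Measure.pi fun _ => volume.restrict (Ioi 0) := by
  rw [volume_pi, Measure.restrict_pi_pi]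

theorem ae_restrict_pi_Ioi_pos {ι : Type*} [Fintype ι] :
    ∀ᵐ x ∂(volume.restrict (univ.pi fun _ : ι => Ioi (0 : ℝ))), ∀ i, 0 < x i :=
  (ae_restrict_mem (MeasurableSet.univ_pi fun _ => measurableSet_Ioi)).mono fun _ hx i =>
    hx i (mem_univ i)

noncomputable def mirrorKernel {ι : Type*} [Fintype ι] (z : ℝ) (x : ι → ℝ) (q : ℝ) : ℝ :=
  Real.exp (-(∑ i, x i + q / ∏ i, x i) / z) / ∏ i, x i

section MirrorKernel

variable {ι : Type*} [Fintype ι] {z : ℝ} {x : ι → ℝ}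

theorem measurable_mirrorKernel (z : ℝ) :
    Measurable fun p : (ι → ℝ) × ℝ => mirrorKernel z p.1 p.2 := by
  unfold mirrorKernel; fun_prop

theorem mirrorKernel_nonneg (hx : ∀ i, 0 < x i) (q : ℝ) : 0 ≤ mirrorKernel z x q :=
  div_nonneg (Real.exp_pos _).le (Finset.prod_pos fun i _ => hx i).le

theorem mirrorKernel_eq_mul_exp (z : ℝ) (x : ι → ℝ) (q : ℝ) :
    mirrorKernel z x q
      = Real.exp (-(∑ i, x i) / z) / (∏ i, x i) * Real.exp (-(q / (z * ∏ i, x i))) := by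
  rw [mirrorKernel, div_mul_eq_mul_div, ← Real.exp_add]
  congr 2
  ring

theorem hasMellin_mirrorKernel (hz : 0 < z) (hx : ∀ i, 0 < x i) {s : ℂ} (hs : 0 < s.re) :
    HasMellin (fun q => (mirrorKernel z x q : ℂ)) s
      ((z : ℂ) ^ s * Gamma s * ∏ i, (x i : ℂ) ^ (s - 1) • ((Real.exp (-(x i / z)) : ℝ) : ℂ)) := by
  have hb : 0 < ∏ i, x i := Finset.prod_pos fun i _ => hx i
  have h := hasMellin_exp_neg_div (mul_pos hz hb) hs
  have hfun : (fun q => (mirrorKernel z x q : ℂ)) = fun q =>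
      ((Real.exp (-(∑ i, x i) / z) / ∏ i, x i : ℝ) : ℂ) •
        ((Real.exp (-(q / (z * ∏ i, x i))) : ℝ) : ℂ) := by
    funext q
    rw [mirrorKernel_eq_mul_exp, ofReal_mul, smul_eq_mul]
  rw [hfun]
  have hpow : ((∏ i, x i : ℝ) : ℂ) ^ s = (∏ i, (x i : ℂ) ^ (s - 1)) * ∏ i, (x i : ℂ) := by
    rw [← ofReal_prod_cpow _ fun i _ => (hx i).le, cpow_sub _ _ (by exact_mod_cast hb.ne'),
      cpow_one, ← ofReal_prod, div_mul_cancel₀ _ (by exact_mod_cast hb.ne')]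
  refine ⟨h.1.const_smul _, ?_⟩
  rw [(hasMellin_const_smul h.1 _).2, h.2, smul_eq_mul, ofReal_mul,
    mul_cpow_ofReal_nonneg hz.le hb.le, hpow, Real.exp_neg_sum_div]
  have hb' : (∏ i, (x i : ℂ)) ≠ 0 := by exact_mod_cast hb.ne'
  simp only [smul_eq_mul, Finset.prod_mul_distrib]
  push_cast
  field_simp

theorem mirrorKernel_le (hz : 0 < z) (x : ι → ℝ) {q : ℝ} (hq : 0 < q) :
    mirrorKernel z x q ≤ Real.exp (-(∑ i, x i) / z) * (z / q) := by
  obtain ⟨y, hy⟩ : ∃ y, y = q / (z * ∏ i, x i) := ⟨_, rfl⟩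
  calc mirrorKernel z x q = Real.exp (-(∑ i, x i) / z) * (z / q) * (y * Real.exp (-y)) := by
        rw [mirrorKernel_eq_mul_exp, hy]; field_simp
    _ ≤ Real.exp (-(∑ i, x i) / z) * (z / q) * 1 := by
        gcongr
        exact (Real.mul_exp_neg_le_exp_neg_one y).trans (Real.exp_le_one_iff.mpr (by norm_num))
    _ = _ := mul_one _

theorem integrableOn_exp_neg_sum_div (hz : 0 < z) :
    IntegrableOn (fun x : ι → ℝ => Real.exp (-(∑ i, x i) / z)) (univ.pi fun _ => Ioi 0) := by
  have h : IntegrableOn (fun t : ℝ => Real.exp (-(t / z))) (Ioi 0) := by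
    simpa only [neg_mul, ← div_eq_inv_mul] using exp_neg_integrableOn_Ioi 0 (inv_pos.mpr hz)
  simp only [IntegrableOn, volume_restrict_pi_Ioi, Real.exp_neg_sum_div]
  exact Integrable.fintype_prod fun _ => h

end MirrorKernel

theorem hasMellin_mirrorOscIntegral (n : ℕ) {z : ℝ} (hz : 0 < z) {s : ℂ} (hs : 0 < s.re) :
    HasMellin (fun q => (mirrorOscIntegral n z q : ℂ)) s (((z : ℂ) ^ s * Gamma s) ^ (n + 1)) := by
  set μ := volume.restrict (univ.pi fun _ : Fin n => Ioi (0 : ℝ))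
  have hpos : ∀ᵐ x ∂μ, ∀ i, 0 < x i := ae_restrict_pi_Ioi_pos
  have hK : ∀ {s' : ℂ}, 0 < s'.re → ∀ᵐ x ∂μ, HasMellin (fun q => (mirrorKernel z x q : ℂ)) s'
      ((z : ℂ) ^ s' * Gamma s' *
        ∏ i, (x i : ℂ) ^ (s' - 1) • ((Real.exp (-(x i / z)) : ℝ) : ℂ)) :=
    fun hs' => hpos.mono fun x hx => hasMellin_mirrorKernel hz hx hs'
  have hprod : ∀ {s' : ℂ}, 0 < s'.re →
      Integrable (fun x => ∏ i, (x i : ℂ) ^ (s' - 1) • ((Real.exp (-(x i / z)) : ℝ) : ℂ)) μ ∧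
      ∫ x, ∏ i, (x i : ℂ) ^ (s' - 1) • ((Real.exp (-(x i / z)) : ℝ) : ℂ) ∂μ
        = ((z : ℂ) ^ s' * Gamma s') ^ n := by
    intro s' hs'
    have h1 := hasMellin_exp_neg_div hz hs'
    rw [show μ = _ from volume_restrict_pi_Ioi]
    refine ⟨Integrable.fintype_prod fun _ => h1.1, ?_⟩
    rw [integral_fintype_prod_eq_pow
      (fun t : ℝ => (t : ℂ) ^ (s' - 1) • ((Real.exp (-(t / z)) : ℝ) : ℂ)), Fintype.card_fin]
    exact congrArg (· ^ n) h1.2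
  have hσ : 0 < (s.re : ℂ).re := by simpa using hs
  have hInt := integrable_cpow_smul_prod_of_nonneg
    ((Complex.measurable_ofReal.comp measurable_snd).pow_const (s - 1) |>.smul
      (Complex.measurable_ofReal.comp (measurable_mirrorKernel z))).aestronglyMeasurable
    (hpos.mono fun x hx => mirrorKernel_nonneg hx) ((hK hs).mono fun _ h => h.1)
    (((hprod hσ).1.const_mul _).congr ((hK hσ).mono fun _ h => h.2.symm))
  have hF : (fun q => (mirrorOscIntegral n z q : ℂ)) = fun q => ∫ x, (mirrorKernel z x q : ℂ) ∂μ :=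
    funext fun q => integral_complex_ofReal.symm
  obtain ⟨hconv, hval⟩ := hasMellin_integral (K := fun x q => (mirrorKernel z x q : ℂ)) hInt
  rw [hF]
  refine ⟨hconv, hval.trans ?_⟩
  rw [integral_congr_ae ((hK hs).mono fun x h => h.2), integral_const_mul, (hprod hs).2, pow_succ']

theorem continuousAt_mirrorOscIntegral (n : ℕ) {z : ℝ} (hz : 0 < z) {q : ℝ} (hq : 0 < q) :
    ContinuousAt (mirrorOscIntegral n z) q := by
  refine continuousAt_of_dominated (F := fun q x => mirrorKernel z x q)
    (bound := fun x => Real.exp (-(∑ i, x i) / z) * (2 * z / q))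
    (Filter.Eventually.of_forall fun q' =>
      (measurable_mirrorKernel z).comp (measurable_id.prodMk measurable_const)
        |>.aestronglyMeasurable) ?_
    ((integrableOn_exp_neg_sum_div hz).mul_const _)
    (Filter.Eventually.of_forall fun x => by unfold mirrorKernel; fun_prop)
  filter_upwards [lt_mem_nhds (half_lt_self hq)] with q' hq'
  filter_upwards [ae_restrict_pi_Ioi_pos] with x hx
  rw [Real.norm_of_nonneg (mirrorKernel_nonneg hx q')]
  refine (mirrorKernel_le hz x (by linarith)).trans ?_
  gcongr _ * ?_
  rw [div_le_div_iff₀ (by linarith) hq]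
  nlinarith

theorem mellinBarnesIntegrand_eq (n : ℕ) {z q : ℝ} (hz : 0 < z) (hq : 0 < q) (c t : ℝ) :
    mellinBarnesIntegrand n z q c t
      = (q : ℂ) ^ (-(c + t * I)) * ((z : ℂ) ^ (c + t * I) * Gamma (c + t * I)) ^ (n + 1) := by
  rw [mellinBarnesIntegrand, mul_pow, ← cpow_nat_mul,
    cpow_def_of_ne_zero (ofReal_ne_zero.2 hq.ne'), cpow_def_of_ne_zero (ofReal_ne_zero.2 hz.ne'),
    ← ofReal_log hq.le, ← ofReal_log hz.le]
  push_cast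
  ring_nf

/-- for `n ≥ 1` and `z, q, c > 0`, the Mellin–Barnes integrand is
integrable on `ℝ` and the Mellin–Barnes representation
`F_{n,z}(q) = (1/2π) ∫_ℝ q^{−(c+it)} z^{(n+1)(c+it)} Γ(c+it)^{n+1} dt` holds. -/
theorem mellinBarnes_representation (n : ℕ) (hn : 1 ≤ n) (z q c : ℝ)
    (hz : 0 < z) (hq : 0 < q) (hc : 0 < c) :
    Integrable (mellinBarnesIntegrand n z q c) volume ∧
    (mirrorOscIntegral n z q : ℂ) =
      (1 / (2 * Real.pi) : ℝ) * ∫ t : ℝ, mellinBarnesIntegrand n z q c t := by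
  set f : ℝ → ℂ := fun q => (mirrorOscIntegral n z q : ℂ)
  have hM : ∀ s : ℂ, 0 < s.re → HasMellin f s (((z : ℂ) ^ s * Gamma s) ^ (n + 1)) :=
    fun s hs => hasMellin_mirrorOscIntegral n hz hs
  have hV : VerticalIntegrable (mellin f) c :=
    (verticalIntegrable_cpow_mul_Gamma_pow hz hc (by omega)).congr
      (Filter.Eventually.of_forall fun t => (hM _ (by simpa using hc)).2.symm)
  have hE : mellinBarnesIntegrand n z q c =
      fun t : ℝ => (q : ℂ) ^ (-(c + t * I)) • mellin f (c + t * I) :=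
    funext fun t => by
      rw [mellinBarnesIntegrand_eq n hz hq, (hM _ (by simpa using hc)).2, smul_eq_mul]
  have hfq : ContinuousAt f q :=
    continuous_ofReal.continuousAt.comp (continuousAt_mirrorOscIntegral n hz hq)
  refine ⟨hE ▸ Integrable.ofReal_cpow_mul hV hq (r := -c) (by fun_prop) fun t => by simp, ?_⟩
  change f q = _
  rw [← mellinInv_mellin_eq c f hq (hM c (by simpa using hc)).1 hV hfq, mellinInv, hE, real_smul]
end

section
/- Let z > 0 be a real number and let γ denote the Euler–Mascheroni constant. Then the mirror oscillatory integral of ℙ¹ satisfies lim_{q→0⁺} ( ∫_0^∞ exp(−(x + q/x)/z) dx/x − ( log(z²/q) − 2γ ) ) = 0. -/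
/-!
After the substitution `x = z t` the integral becomes `∫₀^∞ e^{-(t + r²/t)} dt/t` with
`r = √q / z`, and `log (z² / q) = -2 log r`. The inversion `t ↦ r²/t` preserves both `dt/t` and
the integrand, so the integral is twice its part over `(r, ∞)`. There `1 - e^{-r²/t} ≤ r²/t`, so
replacing the integrand by `e^{-t}/t` costs at most `∫_r^∞ r²/t² dt = r`, leaving the exponential
integral `E₁(r) = ∫_r^∞ e^{-t} dt/t`. Integration by parts gives
`E₁(r) + log r = (1 - e^{-r}) log r + ∫_r^∞ e^{-t} log t dt → ∫₀^∞ e^{-t} log t dt = Γ'(1) = -γ`.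
-/

open MeasureTheory Set Filter Real Topology

theorem abs_log_le_two_mul_rpow_neg_half_add_self {t : ℝ} (ht : 0 < t) :
    |log t| ≤ 2 * t ^ (-(1 / 2) : ℝ) + t := by
  have hlog_le : log t ≤ t := (log_le_sub_one_of_pos ht).trans (by linarith)
  have hneg_log_le : -log t ≤ 2 * t ^ (-(1 / 2) : ℝ) := by
    have h := log_le_rpow_div (inv_pos.2 ht).le (by norm_num : (0 : ℝ) < 1 / 2)
    rw [log_inv, inv_rpow ht.le, ← rpow_neg ht.le, div_eq_mul_inv, mul_comm] at h
    exact h.trans_eq (by norm_num)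
  have hpos : 0 ≤ 2 * t ^ (-(1 / 2) : ℝ) := by positivity
  rw [abs_le]
  constructor <;> linarith

theorem integrableOn_exp_neg_mul_log :
    IntegrableOn (fun t => exp (-t) * log t) (Ioi 0) := by
  have hbound : IntegrableOn (fun t => 2 * (exp (-t) * t ^ ((1 / 2 : ℝ) - 1)) +
      exp (-t) * t ^ ((2 : ℝ) - 1)) (Ioi 0) :=
    ((GammaIntegral_convergent (by norm_num)).const_mul 2).add
      (GammaIntegral_convergent (by norm_num))
  refine hbound.mono' (by fun_prop)
    ((ae_restrict_iff' measurableSet_Ioi).2 (ae_of_all _ fun t (ht : 0 < t) => ?_))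
  rw [norm_mul, norm_of_nonneg (exp_pos _).le, norm_eq_abs]
  calc exp (-t) * |log t| ≤ exp (-t) * (2 * t ^ (-(1 / 2) : ℝ) + t) :=
        mul_le_mul_of_nonneg_left (abs_log_le_two_mul_rpow_neg_half_add_self ht) (exp_pos _).le
    _ = _ := by norm_num; ring

theorem integral_exp_neg_mul_log :
    ∫ t in Ioi (0 : ℝ), exp (-t) * log t = -eulerMascheroniConstant := by
  have hcomplex := Complex.hasDerivAt_GammaIntegral (s := 1) (by norm_num)
  have hintegral : ∫ t : ℝ in Ioi 0, (t : ℂ) ^ ((1 : ℂ) - 1) * (log t * exp (-t)) =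
      ((∫ t in Ioi (0 : ℝ), exp (-t) * log t : ℝ) : ℂ) := by
    rw [← integral_complex_ofReal]
    refine setIntegral_congr_fun measurableSet_Ioi fun t _ => ?_
    push_cast
    rw [sub_self, Complex.cpow_zero, one_mul, mul_comm]
  rw [hintegral] at hcomplex
  have hΓ : HasDerivAt Gamma (∫ t in Ioi (0 : ℝ), exp (-t) * log t) 1 := by
    have hre := hcomplex.real_of_complex
    rw [Complex.ofReal_re] at hre
    refine hre.congr_of_eventuallyEq ?_
    filter_upwards [eventually_gt_nhds one_pos] with x hx
    rw [← Complex.Gamma_eq_integral (by simpa using hx), Complex.Gamma_ofReal, Complex.ofReal_re]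
  exact hΓ.unique hasDerivAt_Gamma_one

theorem tendsto_setIntegral_Ioi_nhdsGT {E : Type*} [NormedAddCommGroup E] [NormedSpace ℝ E]
    {f : ℝ → E} {a : ℝ} (hf : IntegrableOn f (Ioi a)) :
    Tendsto (fun r => ∫ t in Ioi r, f t) (𝓝[>] a) (𝓝 (∫ t in Ioi a, f t)) := by
  refine ((aecover_Ioi_of_Ioi (tendsto_id.mono_left nhdsWithin_le_nhds)
    ).integral_tendsto_of_countably_generated hf).congr' ?_
  filter_upwards [self_mem_nhdsWithin] with r (hr : a < r)
  rw [Measure.restrict_restrict measurableSet_Ioi, Ioi_inter_Ioi, id, max_eq_left hr.le]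

theorem integrableOn_exp_neg_div_Ioi {r : ℝ} (hr : 0 < r) :
    IntegrableOn (fun t => exp (-t) / t) (Ioi r) := by
  refine ((exp_neg_integrableOn_Ioi r one_pos).div_const r).mono'
    (by fun_prop : Measurable _).aestronglyMeasurable
    ((ae_restrict_iff' measurableSet_Ioi).2 (ae_of_all _ fun t (ht : r < t) => ?_))
  rw [norm_div, norm_of_nonneg (exp_pos _).le, norm_of_nonneg (hr.trans ht).le, neg_one_mul]
  exact div_le_div_of_nonneg_left (exp_pos _).le hr ht.le

theorem tendsto_exp_neg_mul_log_atTop : Tendsto (fun t => exp (-t) * log t) atTop (𝓝 0) := by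
  refine squeeze_zero' ?_ ?_ (by simpa using tendsto_pow_mul_exp_neg_atTop_nhds_zero 1)
  · filter_upwards [eventually_ge_atTop 1] with t ht
    exact mul_nonneg (exp_pos _).le (log_nonneg ht)
  · filter_upwards [eventually_gt_atTop 0] with t ht
    rw [mul_comm]
    exact mul_le_mul_of_nonneg_right ((log_le_sub_one_of_pos ht).trans (by linarith))
      (exp_pos _).le

theorem integral_exp_neg_div_Ioi {r : ℝ} (hr : 0 < r) :
    ∫ t in Ioi r, exp (-t) / t = -(exp (-r) * log r) + ∫ t in Ioi r, exp (-t) * log t := by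
  have hlog_int : IntegrableOn (fun t => exp (-t) * log t) (Ioi r) :=
    integrableOn_exp_neg_mul_log.mono_set (Ioi_subset_Ioi hr.le)
  have h := integral_Ioi_mul_deriv_eq_deriv_mul (u := fun t => exp (-t)) (v := log)
    (u' := fun t => -exp (-t)) (v' := fun t => t⁻¹)
    (fun t _ => by simpa using (hasDerivAt_neg t).exp)
    (fun t (ht : r < t) => hasDerivAt_log (hr.trans ht).ne')
    (integrableOn_exp_neg_div_Ioi hr)
    (hlog_int.neg.congr_fun (fun t _ => (neg_mul _ _).symm) measurableSet_Ioi)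
    (((continuous_exp.comp continuous_neg).continuousAt.mul
      (continuousAt_log hr.ne')).tendsto.mono_left nhdsWithin_le_nhds)
    tendsto_exp_neg_mul_log_atTop
  simp only [neg_mul, integral_neg] at h
  simpa [div_eq_mul_inv] using h

theorem tendsto_one_sub_exp_neg_mul_log_nhdsGT_zero :
    Tendsto (fun r => (1 - exp (-r)) * log r) (𝓝[>] 0) (𝓝 0) := by
  have hmul_log : Tendsto (fun r => r * log r) (𝓝[>] 0) (𝓝 0) := by
    simpa using (continuous_mul_log.tendsto 0).mono_left nhdsWithin_le_nhds
  refine squeeze_zero_norm' ?_ (by simpa using hmul_log.norm)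
  filter_upwards [self_mem_nhdsWithin] with r (hr : 0 < r)
  rw [norm_mul, norm_of_nonneg (by linarith [exp_le_one_iff.2 (neg_nonpos.2 hr.le)]),
    norm_eq_abs, abs_of_pos hr]
  exact mul_le_mul_of_nonneg_right (by linarith [add_one_le_exp (-r)]) (abs_nonneg _)

theorem tendsto_integral_exp_neg_div_add_log :
    Tendsto (fun r => (∫ t in Ioi r, exp (-t) / t) + log r) (𝓝[>] 0)
      (𝓝 (-eulerMascheroniConstant)) := by
  have h := tendsto_one_sub_exp_neg_mul_log_nhdsGT_zero.add
    (tendsto_setIntegral_Ioi_nhdsGT integrableOn_exp_neg_mul_log)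
  rw [zero_add, integral_exp_neg_mul_log] at h
  refine h.congr' ?_
  filter_upwards [self_mem_nhdsWithin] with r (hr : 0 < r)
  rw [integral_exp_neg_div_Ioi hr]
  ring

theorem integral_Ioi_comp_mul_div_self {b : ℝ} (hb : 0 < b) (g : ℝ → ℝ) :
    ∫ x in Ioi 0, g (b * x) / x = ∫ x in Ioi 0, g x / x := by
  have h := integral_comp_mul_left_Ioi (fun x => g x / x) 0 hb
  rw [mul_zero, smul_eq_mul] at h
  calc ∫ x in Ioi 0, g (b * x) / x = ∫ x in Ioi 0, b * (g (b * x) / (b * x)) :=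
        setIntegral_congr_fun measurableSet_Ioi fun x (hx : 0 < x) => by field_simp
    _ = ∫ x in Ioi 0, g x / x := by rw [integral_const_mul, h, mul_inv_cancel_left₀ hb.ne']

theorem integral_Ioo_comp_div_div {a c : ℝ} (ha : 0 < a) (hc : 0 < c) (g : ℝ → ℝ) :
    ∫ t in Ioo 0 a, g (c / t) / t = ∫ t in Ioi (c / a), g t / t := by
  have himage : (fun t => c / t) '' Ioi (c / a) = Ioo 0 a := by
    ext y
    constructor
    · rintro ⟨t, ht : c / a < t, rfl⟩
      have ht0 : 0 < t := (div_pos hc ha).trans ht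
      exact ⟨div_pos hc ht0, (div_lt_comm₀ ha ht0).1 ht⟩
    · rintro ⟨hy0, hya⟩
      exact ⟨c / y, div_lt_div_of_pos_left hc hy0 hya, div_div_cancel₀ hc.ne'⟩
  have hderiv : ∀ t ∈ Ioi (c / a),
      HasDerivWithinAt (fun t => c / t) (-(c / t ^ 2)) (Ioi (c / a)) t := fun t ht => by
    have ht0 : t ≠ 0 := ((div_pos hc ha).trans ht).ne'
    simpa [div_eq_mul_inv, neg_div] using ((hasDerivAt_inv ht0).const_mul c).hasDerivWithinAt
  have hinj : InjOn (fun t => c / t) (Ioi (c / a)) := fun s hs t ht hst => by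
    simpa [div_eq_div_iff, hc.ne', ((div_pos hc ha).trans hs).ne',
      ((div_pos hc ha).trans ht).ne'] using hst.symm
  rw [← himage, integral_image_eq_integral_abs_deriv_smul measurableSet_Ioi hderiv hinj]
  refine setIntegral_congr_fun measurableSet_Ioi fun t (ht : c / a < t) => ?_
  have ht0 : 0 < t := (div_pos hc ha).trans ht
  rw [smul_eq_mul, abs_neg, abs_of_pos (by positivity), div_div_cancel₀ hc.ne']
  field_simp

theorem exp_neg_div_div_le_inv {s t : ℝ} (hs : 0 < s) (ht : 0 < t) :
    exp (-(s / t)) / t ≤ s⁻¹ :=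
  calc exp (-(s / t)) / t ≤ (s / t)⁻¹ / t := by
        gcongr
        rw [exp_neg]
        exact inv_anti₀ (by positivity) (by linarith [add_one_le_exp (s / t)])
    _ = s⁻¹ := by field_simp

theorem integrableOn_exp_neg_add_div_div {s : ℝ} (hs : 0 < s) :
    IntegrableOn (fun t => exp (-(t + s / t)) / t) (Ioi 0) := by
  refine ((exp_neg_integrableOn_Ioi 0 one_pos).mul_const s⁻¹).mono'
    (by fun_prop : Measurable _).aestronglyMeasurable
    ((ae_restrict_iff' measurableSet_Ioi).2 (ae_of_all _ fun t (ht : 0 < t) => ?_))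
  rw [norm_of_nonneg (by positivity), neg_add, exp_add, mul_div_assoc, neg_one_mul]
  exact mul_le_mul_of_nonneg_left (exp_neg_div_div_le_inv hs ht) (exp_pos _).le

theorem abs_exp_neg_add_div_div_sub_le {s t : ℝ} (hs : 0 ≤ s) (ht : 0 < t) :
    |exp (-(t + s / t)) / t - exp (-t) / t| ≤ s * t ^ (-2 : ℝ) := by
  have hexp_le : exp (-t) ≤ 1 := exp_le_one_iff.2 (by linarith)
  have hgap_nonneg : 0 ≤ 1 - exp (-(s / t)) := by
    linarith [exp_le_one_iff.2 (neg_nonpos.2 (div_nonneg hs ht.le))]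
  have hgap_le : 1 - exp (-(s / t)) ≤ s / t := by linarith [add_one_le_exp (-(s / t))]
  have hfactor : exp (-(t + s / t)) / t - exp (-t) / t =
      -(exp (-t) * (1 - exp (-(s / t))) / t) := by
    rw [neg_add, exp_add]; ring
  rw [hfactor, abs_neg, abs_of_nonneg (by positivity), rpow_neg ht.le, rpow_two, div_le_iff₀ ht]
  calc exp (-t) * (1 - exp (-(s / t))) ≤ 1 * (s / t) :=
        mul_le_mul hexp_le hgap_le hgap_nonneg zero_le_one
    _ = s * (t ^ 2)⁻¹ * t := by field_simp

theorem abs_integral_exp_neg_add_div_div_sub_le {r s : ℝ} (hr : 0 < r) (hs : 0 < s) :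
    |(∫ t in Ioi r, exp (-(t + s / t)) / t) - ∫ t in Ioi r, exp (-t) / t| ≤ s / r := by
  have hbound : ∫ t in Ioi r, s * t ^ (-2 : ℝ) = s / r := by
    rw [integral_const_mul, integral_Ioi_rpow_of_lt (by norm_num) hr]
    norm_num [rpow_neg_one, div_eq_mul_inv]
  rw [← hbound, ← integral_sub ((integrableOn_exp_neg_add_div_div hs).mono_set
    (Ioi_subset_Ioi hr.le)) (integrableOn_exp_neg_div_Ioi hr), ← norm_eq_abs]
  refine norm_integral_le_of_norm_le
    ((integrableOn_Ioi_rpow_of_lt (a := -2) (by norm_num) hr).const_mul s)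
    ((ae_restrict_iff' measurableSet_Ioi).2 (ae_of_all _ fun t (ht : r < t) => ?_))
  exact abs_exp_neg_add_div_div_sub_le hs.le (hr.trans ht)

theorem integral_exp_neg_add_sq_div_div_eq_two_mul {r : ℝ} (hr : 0 < r) :
    ∫ t in Ioi 0, exp (-(t + r ^ 2 / t)) / t = 2 * ∫ t in Ioi r, exp (-(t + r ^ 2 / t)) / t := by
  have hint := integrableOn_exp_neg_add_div_div (pow_pos hr 2)
  have hinversion : ∫ t in Ioo 0 r, exp (-(t + r ^ 2 / t)) / t =
      ∫ t in Ioi r, exp (-(t + r ^ 2 / t)) / t := by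
    have h := integral_Ioo_comp_div_div hr (pow_pos hr 2) fun u => exp (-(u + r ^ 2 / u))
    rw [sq, mul_div_cancel_right₀ _ hr.ne', ← sq] at h
    rw [← h]
    refine setIntegral_congr_fun measurableSet_Ioo fun t _ => ?_
    rw [div_div_cancel₀ (pow_pos hr 2).ne', add_comm]
  rw [← Ioc_union_Ioi_eq_Ioi hr.le, setIntegral_union (Ioc_disjoint_Ioi le_rfl) measurableSet_Ioi
    (hint.mono_set Ioc_subset_Ioi_self) (hint.mono_set (Ioi_subset_Ioi hr.le)),
    integral_Ioc_eq_integral_Ioo, hinversion, two_mul]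

theorem tendsto_integral_exp_neg_add_sq_div_div_add_two_mul_log :
    Tendsto (fun r => (∫ t in Ioi 0, exp (-(t + r ^ 2 / t)) / t) + 2 * log r) (𝓝[>] 0)
      (𝓝 (-2 * eulerMascheroniConstant)) := by
  have hperturbation : Tendsto (fun r => (∫ t in Ioi r, exp (-(t + r ^ 2 / t)) / t) -
      ∫ t in Ioi r, exp (-t) / t) (𝓝[>] 0) (𝓝 0) := by
    refine squeeze_zero_norm' ?_ (tendsto_id.mono_left nhdsWithin_le_nhds)
    filter_upwards [self_mem_nhdsWithin] with r (hr : 0 < r)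
    simpa [sq, mul_div_cancel_right₀ _ hr.ne'] using
      abs_integral_exp_neg_add_div_div_sub_le hr (pow_pos hr 2)
  have h := (hperturbation.add tendsto_integral_exp_neg_div_add_log).const_mul 2
  rw [zero_add, mul_neg, ← neg_mul] at h
  refine h.congr' ?_
  filter_upwards [self_mem_nhdsWithin] with r (hr : 0 < r)
  rw [integral_exp_neg_add_sq_div_div_eq_two_mul hr]
  ring

theorem integral_exp_neg_add_div_div_div_eq {z : ℝ} (hz : 0 < z) (q : ℝ) :
    ∫ x in Ioi 0, exp (-(x + q / x) / z) / x = ∫ t in Ioi 0, exp (-(t + q / z ^ 2 / t)) / t := by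
  rw [← integral_Ioi_comp_mul_div_self (inv_pos.2 hz) fun t => exp (-(t + q / z ^ 2 / t))]
  refine setIntegral_congr_fun measurableSet_Ioi fun x (hx : 0 < x) => ?_
  congr 3
  field_simp

/-- the mirror-symmetric Gamma asymptotics for `ℙ¹`: for `z > 0`,
`lim_{q→0⁺} ( ∫₀^∞ e^{−(x+q/x)/z} dx/x − (log(z²/q) − 2γ) ) = 0`,
where `γ` is the Euler–Mascheroni constant. -/
theorem mirrorOscIntegral_P1_gamma_asymptotics (z : ℝ) (hz : 0 < z) :
    Filter.Tendsto
      (fun q : ℝ =>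
        (∫ x in Set.Ioi (0 : ℝ), Real.exp (-(x + q / x) / z) / x) -
          (Real.log (z ^ 2 / q) - 2 * Real.eulerMascheroniConstant))
      (nhdsWithin 0 (Set.Ioi (0 : ℝ))) (nhds 0) := by
  have hr : Tendsto (fun q => √q / z) (𝓝[>] 0) (𝓝[>] 0) := by
    refine tendsto_nhdsWithin_iff.2 ⟨?_, ?_⟩
    · exact ((continuous_sqrt.div_const z).tendsto' 0 0 (by simp)).mono_left nhdsWithin_le_nhds
    · filter_upwards [self_mem_nhdsWithin] with q (hq : 0 < q)
      exact div_pos (sqrt_pos.2 hq) hz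
  have h := (tendsto_integral_exp_neg_add_sq_div_div_add_two_mul_log.comp hr).add_const
    (2 * eulerMascheroniConstant)
  rw [neg_mul, neg_add_cancel] at h
  refine h.congr' ?_
  filter_upwards [self_mem_nhdsWithin] with q (hq : 0 < q)
  have hr_sq : (√q / z) ^ 2 = q / z ^ 2 := by rw [div_pow, sq_sqrt hq.le]
  have hlog : log (z ^ 2 / q) = -(2 * log (√q / z)) := by
    rw [← inv_div, log_inv, ← hr_sq, log_pow, Nat.cast_ofNat]
  simp only [Function.comp_apply, integral_exp_neg_add_div_div_div_eq hz, hr_sq, hlog]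
  ring
end

section
/- Let k, m ≥ 1 be integers, let M : Fin m → Fin k → ℤ be an integer matrix, and for p : Fin k → ℂ set D_i(p) = Σ_{a} M(i,a) · p(a). Let d : Fin k → ℤ and set ν_i = Σ_a M(i,a) · d(a) ∈ ℤ. Let z < 0 be a real number and define Î(p) = Π_{i=1}^m exp(D_i(p) · log(−z)) · Γ(D_i(p)), where Γ is the complex Gamma function and log is the real logarithm of −z > 0. Then for every p : Fin k → ℂ such that for all i neither D_i(p) nor D_i(p + d) is a nonpositive integer, the function Î solves the Mellin-transformed GKZ difference equation: Π_{i : ν_i > 0} Π_{j=0}^{ν_i − 1} ( (−D_i(p) − j) · z ) · Î(p) = Π_{i : ν_i < 0} Π_{j=0}^{−ν_i − 1} ( (−D_i(p + d) − j) · z ) · Î(p + d), where p + d means the componentwise shift p(a) + d(a). -/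
lemma key_gamma_shift (w : ℂ) (hw : ∀ l : ℕ, w ≠ -(l : ℂ)) (n : ℕ) (z : ℝ) (hz : z < 0) :
    Complex.exp ((w + n) * Real.log (-z)) * Complex.Gamma (w + n)
      = (∏ j ∈ Finset.range n, ((-w - (j : ℂ)) * (z : ℂ)))
        * (Complex.exp (w * Real.log (-z)) * Complex.Gamma w) := by
  induction n with
  | zero => simp
  | succ n ih =>
      have hne : w + (n : ℂ) ≠ 0 := by
        intro h
        exact hw n (by linear_combination h)
      have hΓ : Complex.Gamma (w + (n + 1 : ℕ)) = (w + n) * Complex.Gamma (w + n) := by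
        have := Complex.Gamma_add_one (w + n) hne
        rw [← this]; push_cast; ring_nf
      have hexpL : Complex.exp ((Real.log (-z) : ℂ)) = ((-z : ℝ) : ℂ) := by
        rw [← Complex.ofReal_exp, Real.exp_log (by linarith)]
      have hexp : Complex.exp ((w + (n + 1 : ℕ)) * Real.log (-z))
          = Complex.exp ((w + n) * Real.log (-z)) * (-(z : ℂ)) := by
        have hexpL' : Complex.exp ((Real.log (-z) : ℂ)) = -(z : ℂ) := by
          rw [hexpL]; push_cast; ring
        rw [← hexpL', ← Complex.exp_add]; push_cast; ring_nf
      rw [hΓ, hexp, Finset.prod_range_succ]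
      push_cast
      calc Complex.exp ((w + ↑n) * ↑(Real.log (-z))) * (-↑z) * ((w + ↑n) * Complex.Gamma (w + ↑n))
          = ((-w - ↑n) * ↑z) * (Complex.exp ((w + ↑n) * ↑(Real.log (-z))) * Complex.Gamma (w + ↑n)) := by
            ring
        _ = _ := by rw [ih]; ring

/-- the function `Î(p) = Π_i (−z)^{D_i(p)} Γ(D_i(p))` solves the
Mellin-transformed GKZ difference equation. Here `D_i(p) = Σ_a M(i,a) p(a)`,
`ν_i = Σ_a M(i,a) d(a)`, `z < 0` and `(−z)^w = exp(w log(−z))` with the real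
logarithm, and `p` is such that no `D_i(p)` nor `D_i(p+d)` is a nonpositive
integer. -/
theorem mellin_GKZ_difference_equation (k m : ℕ) (hk : 1 ≤ k) (hm : 1 ≤ m)
    (M : Fin m → Fin k → ℤ) (d : Fin k → ℤ) (z : ℝ) (hz : z < 0)
    (D : (Fin k → ℂ) → Fin m → ℂ)
    (hD : ∀ p i, D p i = ∑ a, (M i a : ℂ) * p a)
    (ν : Fin m → ℤ) (hν : ∀ i, ν i = ∑ a, M i a * d a)
    (Ihat : (Fin k → ℂ) → ℂ)
    (hIhat : ∀ p, Ihat p =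
      ∏ i, Complex.exp (D p i * Real.log (-z)) * Complex.Gamma (D p i))
    (p : Fin k → ℂ)
    (hp : ∀ i, (∀ l : ℕ, D p i ≠ -(l : ℂ)) ∧
      (∀ l : ℕ, D (fun a => p a + (d a : ℂ)) i ≠ -(l : ℂ))) :
    (∏ i ∈ Finset.univ.filter fun i => 0 < ν i,
        ∏ j ∈ Finset.range (ν i).toNat, ((-(D p i) - (j : ℂ)) * (z : ℂ))) * Ihat p =
    (∏ i ∈ Finset.univ.filter fun i => ν i < 0,
        ∏ j ∈ Finset.range (-ν i).toNat,
          ((-(D (fun a => p a + (d a : ℂ)) i) - (j : ℂ)) * (z : ℂ))) *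
      Ihat (fun a => p a + (d a : ℂ)) := by
  set q : Fin k → ℂ := fun a => p a + (d a : ℂ) with hq
  have hDq : ∀ i, D q i = D p i + (ν i : ℂ) := by
    intro i
    rw [hD, hD, hν]
    push_cast
    rw [← Finset.sum_add_distrib]
    exact Finset.sum_congr rfl (fun a _ => by ring)
  rw [hIhat p, hIhat q, Finset.prod_filter, Finset.prod_filter,
    ← Finset.prod_mul_distrib, ← Finset.prod_mul_distrib]
  refine Finset.prod_congr rfl (fun i _ => ?_)
  rcases lt_trichotomy (ν i) 0 with h | h | h
  · -- ν i < 0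
    have h1 : ¬ (0 < ν i) := by omega
    rw [if_neg h1, if_pos h, one_mul]
    have hn : (ν i : ℂ) = -((-ν i).toNat : ℂ) := by
      exact_mod_cast (by omega : (ν i : ℤ) = -(((-ν i).toNat : ℤ)))
    have hw : D p i = D q i + ((-ν i).toNat : ℂ) := by
      rw [hDq, hn]; ring
    rw [hw, key_gamma_shift (D q i) (hp i).2 ((-ν i).toNat) z hz]
  · -- ν i = 0
    have hDqi : D q i = D p i := by rw [hDq, h]; simp
    simp [h, hDqi]
  · -- 0 < ν i
    have h1 : ¬ (ν i < 0) := by omega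
    rw [if_pos h, if_neg h1, one_mul]
    have hn : (ν i : ℂ) = ((ν i).toNat : ℂ) := by
      exact_mod_cast (by omega : (ν i : ℤ) = (((ν i).toNat : ℤ)))
    have hw : D q i = D p i + ((ν i).toNat : ℂ) := by rw [hDq, hn]
    rw [hw, key_gamma_shift (D p i) (hp i).1 ((ν i).toNat) z hz]
end

section
/- For every complex number x with |x| < 1, the series Σ_{k=2}^∞ (−1)^k ζ(k) x^k / k converges and Γ(1 + x) = exp( −γ x + Σ_{k=2}^∞ (−1)^k ζ(k) x^k / k ), where Γ is the complex Gamma function, ζ is the Riemann zeta function, and γ is the Euler–Mascheroni constant. -/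
/-!
Write `Γ(1+x) = lim n^{1+x} n! / ∏_{j=0}^{n} (1+x+j)` (Gauss). Factoring
`1 + x + j = (j+1)(1 + x/(j+1))` turns this into
`Γ(1+x) = exp(-γx + Σ_{j≥0} (x/(j+1) - log(1 + x/(j+1))))`, the harmonic numbers producing `γ`.
Expanding each `x/(j+1) - log(1 + x/(j+1))` in its Taylor series gives a double series that is
absolutely summable for `‖x‖ < 1`; summing it over `j` first yields `ζ(k)` in the `k`-th term.
-/

open Complex Filter Finset Topology
open scoped Nat

lemma Real.tendsto_log_sub_harmonic_add_one :
    Tendsto (fun n : ℕ => Real.log n - harmonic (n + 1)) atTop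
      (𝓝 (-Real.eulerMascheroniConstant)) := by
  have h := (Real.tendsto_harmonic_sub_log.add tendsto_one_div_add_atTop_nhds_zero_nat).neg
  rw [add_zero] at h
  refine h.congr fun n => ?_
  rw [harmonic_succ]
  push_cast
  ring

lemma summable_one_div_nat_add_one_sq : Summable (fun m : ℕ => 1 / ((m : ℝ) + 1) ^ 2) := by
  simpa using (summable_nat_add_iff 1).mpr (Real.summable_one_div_nat_pow.mpr one_lt_two)

namespace Complex

lemma hasSum_sub_log_one_add {z : ℂ} (hz : ‖z‖ < 1) :
    HasSum (fun k : ℕ => (-1) ^ (k + 2) * z ^ (k + 2) / (k + 2)) (z - log (1 + z)) := by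
  have h := ((hasSum_nat_add_iff' 2).mpr (hasSum_taylorSeries_log hz)).neg
  rw [show z - log (1 + z) = -(log (1 + z) - ∑ i ∈ range 2, (-1) ^ (i + 1) * z ^ i / i) by
    simp [sum_range_succ]]
  refine h.congr_fun fun k => ?_
  push_cast
  ring

lemma hasSum_one_div_nat_add_one_pow {k : ℕ} (hk : 1 < k) :
    HasSum (fun m : ℕ => 1 / ((m : ℂ) + 1) ^ k) (riemannZeta k) := by
  have hre : 1 < (k : ℂ).re := by simpa using hk
  rw [zeta_eq_tsum_one_div_nat_add_one_cpow hre]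
  simp only [cpow_natCast]
  refine Summable.hasSum ?_
  simpa [cpow_natCast] using (summable_nat_add_iff 1).mpr (summable_one_div_nat_cpow.mpr hre)

lemma norm_div_natCast_add_one (x : ℂ) (m : ℕ) : ‖x / (m + 1)‖ = ‖x‖ / (m + 1) := by
  rw [norm_div]
  norm_cast

lemma norm_div_natCast_add_one_le (x : ℂ) (m : ℕ) : ‖x / (m + 1)‖ ≤ ‖x‖ := by
  rw [norm_div_natCast_add_one]
  exact div_le_self (norm_nonneg x) (by simp)

lemma summable_taylor_sub_log_one_add_div_nat_add_one {x : ℂ} (hx : ‖x‖ < 1) :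
    Summable (fun p : ℕ × ℕ =>
      (-1 : ℂ) ^ (p.2 + 2) * (x / (p.1 + 1)) ^ (p.2 + 2) / (p.2 + 2)) := by
  have hgeom := summable_geometric_of_lt_one (norm_nonneg x) hx
  refine .of_norm_bounded (summable_one_div_nat_add_one_sq.mul_of_nonneg hgeom
    (fun _ => by positivity) (fun _ => by positivity)) fun ⟨m, k⟩ => ?_
  have h1 : ‖x‖ / ((m : ℝ) + 1) ≤ ‖x‖ := by
    simpa only [norm_div_natCast_add_one] using norm_div_natCast_add_one_le x m
  have h2 : ‖x‖ / ((m : ℝ) + 1) ≤ 1 / ((m : ℝ) + 1) := by gcongr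
  have h3 : (1 : ℝ) ≤ (k : ℝ) + 2 := by linarith [k.cast_nonneg (α := ℝ)]
  calc ‖(-1 : ℂ) ^ (k + 2) * (x / (m + 1)) ^ (k + 2) / (k + 2)‖
      = (‖x‖ / ((m : ℝ) + 1)) ^ k * (‖x‖ / ((m : ℝ) + 1)) ^ 2 / ((k : ℝ) + 2) := by
        rw [norm_div, norm_mul, norm_pow, norm_pow, norm_div_natCast_add_one, norm_neg, norm_one,
          one_pow, one_mul, pow_add]
        norm_cast
    _ ≤ ‖x‖ ^ k * (1 / ((m : ℝ) + 1)) ^ 2 / 1 := by gcongr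
    _ = 1 / ((m : ℝ) + 1) ^ 2 * ‖x‖ ^ k := by rw [div_one, one_div_pow, mul_comm]

lemma exists_hasSum_sub_log_one_add_and_hasSum_zeta {x : ℂ} (hx : ‖x‖ < 1) :
    ∃ S, HasSum (fun m : ℕ => x / (m + 1) - log (1 + x / (m + 1))) S ∧
      HasSum (fun k : ℕ => (-1) ^ (k + 2) * riemannZeta (k + 2) * x ^ (k + 2) / (k + 2)) S := by
  have hF := (summable_taylor_sub_log_one_add_div_nat_add_one hx).hasSum
  have hrow (m : ℕ) : HasSum (fun k : ℕ => (-1 : ℂ) ^ (k + 2) * (x / (m + 1)) ^ (k + 2) / (k + 2))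
      (x / (m + 1) - log (1 + x / (m + 1))) :=
    hasSum_sub_log_one_add ((norm_div_natCast_add_one_le x m).trans_lt hx)
  have hcol (k : ℕ) : HasSum (fun m : ℕ => (-1 : ℂ) ^ (k + 2) * (x / (m + 1)) ^ (k + 2) / (k + 2))
      ((-1) ^ (k + 2) * riemannZeta (k + 2) * x ^ (k + 2) / (k + 2)) := by
    have hζ := (hasSum_one_div_nat_add_one_pow (k := k + 2) (by omega)).mul_left
      ((-1) ^ (k + 2) * x ^ (k + 2) / (k + 2))
    rw [show ((-1) ^ (k + 2) * x ^ (k + 2) / (k + 2)) * riemannZeta ((k + 2 : ℕ) : ℂ) =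
      (-1) ^ (k + 2) * riemannZeta (k + 2) * x ^ (k + 2) / (k + 2) by push_cast; ring] at hζ
    refine hζ.congr_fun fun m => ?_
    rw [div_pow]
    ring
  exact ⟨_, hF.prod_fiberwise hrow, ((Equiv.prodComm ℕ ℕ).hasSum_iff.mpr hF).prod_fiberwise hcol⟩

lemma GammaSeq_one_add_eq {x : ℂ} (hx : ∀ j : ℕ, 1 + x / (j + 1) ≠ 0) {n : ℕ} (hn : n ≠ 0) :
    GammaSeq (1 + x) n = n / (n + 1) * exp (x * (Real.log n - harmonic (n + 1) : ℝ) +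
      ∑ j ∈ range (n + 1), (x / (j + 1) - log (1 + x / (j + 1)))) := by
  have hprod : ∏ j ∈ range (n + 1), (1 + x + j) =
      (n + 1)! * exp (∑ j ∈ range (n + 1), log (1 + x / (j + 1))) := by
    rw [exp_sum, ← prod_range_add_one_eq_factorial, Nat.cast_prod, ← prod_mul_distrib]
    refine prod_congr rfl fun j _ => ?_
    rw [exp_log (hx j)]
    field_simp
    push_cast
    ring
  have hharm : x * (harmonic (n + 1) : ℂ) = ∑ j ∈ range (n + 1), x / (j + 1) := by
    simp [harmonic, mul_sum, div_eq_mul_inv]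
  have hn' : (n : ℂ) ≠ 0 := Nat.cast_ne_zero.mpr hn
  rw [GammaSeq, hprod, cpow_add _ _ hn', cpow_one, cpow_def_of_ne_zero hn', sum_sub_distrib,
    ← hharm, Nat.factorial_succ]
  push_cast
  rw [show ∀ a b c : ℂ, x * (a - b) + (x * b - c) = a * x - c by intros; ring, exp_sub]
  field_simp [Nat.factorial_ne_zero]

lemma Gamma_one_add_eq_exp_of_hasSum {x S : ℂ} (hx : ∀ j : ℕ, 1 + x / (j + 1) ≠ 0)
    (hS : HasSum (fun j : ℕ => x / (j + 1) - log (1 + x / (j + 1))) S) :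
    Gamma (1 + x) = exp (-Real.eulerMascheroniConstant * x + S) := by
  have hlog : Tendsto (fun n : ℕ => x * (Real.log n - harmonic (n + 1) : ℝ)) atTop
      (𝓝 (x * (-Real.eulerMascheroniConstant : ℝ))) :=
    tendsto_const_nhds.mul ((continuous_ofReal.tendsto _).comp
      Real.tendsto_log_sub_harmonic_add_one)
  have hlim : Tendsto (GammaSeq (1 + x)) atTop
      (𝓝 (1 * exp (x * (-Real.eulerMascheroniConstant : ℝ) + S))) := by
    refine ((tendsto_natCast_div_add_atTop (1 : ℂ)).mul
      (hlog.add (hS.tendsto_sum_nat.comp (tendsto_add_atTop_nat 1))).cexp).congr' ?_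
    filter_upwards [eventually_ne_atTop 0] with n hn
    exact (GammaSeq_one_add_eq hx hn).symm
  rw [tendsto_nhds_unique (GammaSeq_tendsto_Gamma _) hlim]
  push_cast
  ring_nf

end Complex

/-- the Taylor expansion of `log Γ(1+x)`: for every complex `x`
with `|x| < 1`, the series `Σ_{k≥2} (−1)^k ζ(k) x^k / k` converges and
`Γ(1+x) = exp(−γx + Σ_{k≥2} (−1)^k ζ(k) x^k / k)`, where `Γ` is the complex
Gamma function, `ζ` the Riemann zeta function and `γ` the Euler–Mascheroni
constant. -/
theorem gamma_one_add_eq_exp_zeta_series (x : ℂ) (hx : ‖x‖ < 1) :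
    Summable (fun k : ℕ =>
      (-1 : ℂ) ^ (k + 2) * riemannZeta (k + 2) * x ^ (k + 2) / (k + 2)) ∧
    Complex.Gamma (1 + x) =
      Complex.exp (-(Real.eulerMascheroniConstant : ℂ) * x +
        ∑' k : ℕ, (-1 : ℂ) ^ (k + 2) * riemannZeta (k + 2) * x ^ (k + 2) / (k + 2)) := by
  obtain ⟨S, hlog, hζ⟩ := Complex.exists_hasSum_sub_log_one_add_and_hasSum_zeta hx
  have hx' : ∀ j : ℕ, 1 + x / (j + 1) ≠ 0 := fun j h => by
    have := (Complex.norm_div_natCast_add_one_le x j).trans_lt hx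
    simp [eq_neg_of_add_eq_zero_right h] at this
  exact ⟨hζ.summable, hζ.tsum_eq ▸ Complex.Gamma_one_add_eq_exp_of_hasSum hx' hlog⟩
end

section
/- Let n ≥ 1 be an integer and q a nonzero complex number. Let R denote the Laurent polynomial ring ℂ[x₁^{±1}, …, xₙ^{±1}] (i.e. the monoid algebra of the group ℤⁿ over ℂ), and let I ⊆ R be the ideal generated by the n elements x_i − q · (x₁ x₂ ⋯ xₙ)^{−1} for i = 1, …, n (the logarithmic partial derivatives x_i ∂W_q/∂x_i of the mirror potential W_q = x₁ + ⋯ + xₙ + q/(x₁⋯xₙ) of ℙⁿ). Then there is an isomorphism of rings R / I ≅ ℂ[T] / (T^{n+1} − q). -/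
/-- The Laurent polynomial ring `ℂ[x₁^{±1},…,xₙ^{±1}]`, realized as the monoid
algebra of the group `ℤⁿ` over `ℂ`. -/
abbrev LaurentRing (n : ℕ) : Type := AddMonoidAlgebra ℂ (Fin n → ℤ)

/-- The `i`-th logarithmic partial derivative `xᵢ ∂W_q/∂xᵢ = xᵢ − q (x₁⋯xₙ)^{−1}`
of the mirror potential `W_q = x₁ + ⋯ + xₙ + q/(x₁⋯xₙ)` of `ℙⁿ`. -/
noncomputable def jacobiGenerator (n : ℕ) (q : ℂ) (i : Fin n) : LaurentRing n :=
  AddMonoidAlgebra.single (Pi.single i (1 : ℤ)) (1 : ℂ) -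
    AddMonoidAlgebra.single (fun _ => (-1 : ℤ)) q

/-!
In the Jacobi ring every variable `xᵢ` becomes equal to `y = q (x₁⋯xₙ)⁻¹`, so `y ^ n = x₁⋯xₙ`
and `y ^ (n + 1) = q`: this gives `ℂ[T]/(T^(n+1) - q) → Jac(W_q)`, `T ↦ y`. Conversely, for
`q ≠ 0` the class of `T` is a unit, so `xᵢ ↦ T` defines a map out of the Laurent ring; it sends
`q (x₁⋯xₙ)⁻¹` to `q T⁻ⁿ = T`, hence kills the relations. The two maps are mutually inverse on the
generators `T` and `xᵢ`.
-/

open Polynomial AddMonoidAlgebra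

section Laurent

variable {R A ι : Type*} [CommSemiring R] [CommSemiring A] [Algebra R A]

theorem AddMonoidAlgebra.algHom_ext_piSingle [Finite ι] [DecidableEq ι]
    {f g : AddMonoidAlgebra R (ι → ℤ) →ₐ[R] A}
    (h : ∀ i, f (single (Pi.single i 1) 1) = g (single (Pi.single i 1) 1)) : f = g := by
  have hof : (f : AddMonoidAlgebra R (ι → ℤ) →* A).comp (of R (ι → ℤ)) =
      (g : AddMonoidAlgebra R (ι → ℤ) →* A).comp (of R (ι → ℤ)) :=
    AddMonoidHom.toMultiplicativeLeft.symm.injective <| by ext i; exact h i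
  ext a
  exact DFunLike.congr_fun hof (Multiplicative.ofAdd a)

variable [Fintype ι]

/-- The substitution `xᵢ ↦ t` of a unit `t` for all the variables of a Laurent polynomial. -/
noncomputable def diagonalEval (t : Aˣ) : AddMonoidAlgebra R (ι → ℤ) →ₐ[R] A :=
  lift R A (ι → ℤ) <| (Units.coeHom A).comp <| AddMonoidHom.toMultiplicativeLeft <|
    (zmultiplesHom _ (Additive.ofMul t)).comp (∑ i, Pi.evalAddMonoidHom (fun _ : ι => ℤ) i)

theorem diagonalEval_single (t : Aˣ) (a : ι → ℤ) (c : R) :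
    diagonalEval t (single a c) = c • ((t ^ ∑ i, a i : Aˣ) : A) := by
  rw [diagonalEval, lift_single]
  simp only [MonoidHom.coe_comp, AddMonoidHom.coe_toMultiplicativeLeft, AddMonoidHom.coe_comp,
    Function.comp_apply, toAdd_ofAdd, AddMonoidHom.finsetSum_apply, Pi.evalAddMonoidHom_apply,
    zmultiplesHom_apply, toMul_zsmul, toMul_ofMul, Units.coeHom_apply]

theorem diagonalEval_single_piSingle [DecidableEq ι] (t : Aˣ) (i : ι) :
    diagonalEval (R := R) t (single (Pi.single i 1) 1) = t := by
  rw [diagonalEval_single, Finset.sum_pi_single', if_pos (Finset.mem_univ i), zpow_one, one_smul]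

end Laurent

section AdjoinRoot

variable {R : Type*} [CommRing R] (n : ℕ) {q : R}

theorem AdjoinRoot.root_X_pow_sub_C_pow :
    root (X ^ (n + 1) - C q) ^ (n + 1) = of _ q := by
  rw [← sub_eq_zero, ← mk_X, ← mk_C, ← map_pow, ← map_sub]
  exact mk_self

theorem AdjoinRoot.isUnit_root_X_pow_sub_C (hq : IsUnit q) :
    IsUnit (root (X ^ (n + 1) - C q)) :=
  isUnit_pow_succ_iff.mp <| by
    rw [root_X_pow_sub_C_pow]
    exact hq.map _

end AdjoinRoot

noncomputable abbrev jacobiIdeal (n : ℕ) (q : ℂ) : Ideal (LaurentRing n) :=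
  Ideal.span (Set.range (jacobiGenerator n q))

abbrev JacobiRing (n : ℕ) (q : ℂ) : Type := LaurentRing n ⧸ jacobiIdeal n q

namespace JacobiRing

variable (n : ℕ) (q : ℂ)

/-- The common class `q (x₁⋯xₙ)⁻¹` of all the variables `xᵢ`. -/
noncomputable def root : JacobiRing n q :=
  Ideal.Quotient.mk _ (single (fun _ => -1) q)

theorem mk_single_piSingle (i : Fin n) :
    Ideal.Quotient.mk (jacobiIdeal n q) (single (Pi.single i 1) 1) = root n q :=
  Ideal.Quotient.eq.mpr (Ideal.subset_span ⟨i, rfl⟩)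

theorem root_pow_succ : root n q ^ (n + 1) = algebraMap ℂ (JacobiRing n q) q := by
  have hprod : root n q ^ n = Ideal.Quotient.mk (jacobiIdeal n q) (single (fun _ => 1) 1) :=
    calc root n q ^ n
        = ∏ i : Fin n, Ideal.Quotient.mk (jacobiIdeal n q) (single (Pi.single i 1) 1) := by
          simp [mk_single_piSingle]
      _ = _ := by rw [← map_prod, prod_single, Finset.univ_sum_single, Finset.prod_const_one]
  have hexp : (fun _ : Fin n => (-1 : ℤ)) + (fun _ => 1) = 0 := by
    funext
    simp
  rw [pow_succ', hprod, root, ← map_mul, single_mul_single, mul_one, hexp]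
  rfl

variable {n q}

noncomputable def rootUnit (hq : q ≠ 0) : (AdjoinRoot (X ^ (n + 1) - C q))ˣ :=
  (AdjoinRoot.isUnit_root_X_pow_sub_C n hq.isUnit).unit

theorem coe_rootUnit (hq : q ≠ 0) :
    (rootUnit (n := n) hq : AdjoinRoot (X ^ (n + 1) - C q)) = AdjoinRoot.root _ :=
  IsUnit.unit_spec _

theorem diagonalEval_rootUnit_single_neg_one (hq : q ≠ 0) :
    diagonalEval (rootUnit (n := n) hq) (single (fun _ : Fin n => (-1 : ℤ)) q) =
      AdjoinRoot.root _ := by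
  have hsum : ∑ _i : Fin n, (-1 : ℤ) = -n := by simp
  rw [diagonalEval_single, hsum, Algebra.smul_def, AdjoinRoot.algebraMap_eq,
    ← AdjoinRoot.root_X_pow_sub_C_pow, ← coe_rootUnit hq, ← Units.val_pow_eq_pow_val,
    ← Units.val_mul, ← zpow_natCast, ← zpow_add, show ((n + 1 : ℕ) : ℤ) + -n = 1 by omega,
    zpow_one]

noncomputable def toAdjoinRoot (hq : q ≠ 0) :
    JacobiRing n q →ₐ[ℂ] AdjoinRoot (X ^ (n + 1) - C q) :=
  Ideal.Quotient.liftₐ _ (diagonalEval (rootUnit hq)) fun a ha => by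
    suffices jacobiIdeal n q ≤ RingHom.ker (diagonalEval (rootUnit hq)) from this ha
    rw [Ideal.span_le]
    rintro _ ⟨i, rfl⟩
    rw [SetLike.mem_coe, RingHom.mem_ker, jacobiGenerator, map_sub, diagonalEval_single_piSingle,
      diagonalEval_rootUnit_single_neg_one, coe_rootUnit, sub_self]

theorem toAdjoinRoot_mk (hq : q ≠ 0) (a : LaurentRing n) :
    toAdjoinRoot hq (Ideal.Quotient.mk _ a) = diagonalEval (rootUnit hq) a :=
  rfl

variable (n q) in
noncomputable def ofAdjoinRoot : AdjoinRoot (X ^ (n + 1) - C q) →ₐ[ℂ] JacobiRing n q :=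
  AdjoinRoot.liftAlgHom _ (Algebra.ofId ℂ _) (root n q) (by simp [root_pow_succ])

theorem ofAdjoinRoot_root : ofAdjoinRoot n q (AdjoinRoot.root _) = root n q :=
  AdjoinRoot.liftAlgHom_root ..

noncomputable def equivAdjoinRoot (hq : q ≠ 0) :
    JacobiRing n q ≃ₐ[ℂ] AdjoinRoot (X ^ (n + 1) - C q) :=
  AlgEquiv.ofAlgHom (toAdjoinRoot hq) (ofAdjoinRoot n q)
    (AdjoinRoot.algHom_ext <| by
      rw [AlgHom.comp_apply, ofAdjoinRoot_root, root, toAdjoinRoot_mk,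
        diagonalEval_rootUnit_single_neg_one, AlgHom.id_apply])
    (Ideal.Quotient.algHom_ext _ <| algHom_ext_piSingle fun i => by
      rw [AlgHom.id_comp, AlgHom.comp_apply, AlgHom.comp_apply, Ideal.Quotient.mkₐ_eq_mk,
        toAdjoinRoot_mk, diagonalEval_single_piSingle, coe_rootUnit, ofAdjoinRoot_root,
        mk_single_piSingle])

end JacobiRing

theorem jacobi_ring_of_Pn_mirror_general (n : ℕ) (q : ℂ) (hq : q ≠ 0) :
    Nonempty
      ((LaurentRing n ⧸ Ideal.span (Set.range (jacobiGenerator n q))) ≃+*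
        (Polynomial ℂ ⧸ Ideal.span
          {Polynomial.X ^ (n + 1) - Polynomial.C q})) :=
  ⟨(JacobiRing.equivAdjoinRoot hq).toRingEquiv⟩

/-- for `n ≥ 1` and `q ≠ 0`, the Jacobi ring of the mirror
potential of `ℙⁿ`, i.e. `ℂ[x₁^{±1},…,xₙ^{±1}] / ⟨xᵢ − q(x₁⋯xₙ)^{−1} : i⟩`, is
isomorphic as a ring to `ℂ[T]/(T^{n+1} − q)`. -/
theorem jacobi_ring_of_Pn_mirror (n : ℕ) (hn : 1 ≤ n) (q : ℂ) (hq : q ≠ 0) :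
    Nonempty
      ((LaurentRing n ⧸ Ideal.span (Set.range (jacobiGenerator n q))) ≃+*
        (Polynomial ℂ ⧸ Ideal.span
          {Polynomial.X ^ (n + 1) - Polynomial.C q})) :=
  jacobi_ring_of_Pn_mirror_general n q hq
end
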